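/- arXiv:2511.14200 — 6 statements merged into one kernel-verified Lean document; each statement's English description precedes it below -/
import Mathlib

section
/- For p' = 1/2 and any p ∈ [0,1] with p ≠ 1/2, the process (|U_n^{p'}|)_{n≥0} is stochastically smaller than (|U_n^{p}|)_{n≥0}. Consequently, (|U_n^{p}|)_{n≥0} is stochastically minimized over p ∈ [0,1] by p = 1/2. -/
/-!
By the symmetry `p ↔ 1 - p` (flip the signs of the steps) we may assume `p ≥ 1/2`, `q = 1 - p`.
Let `R_k` be the law of `|symmetric walk|` started at height `k`, and `B_z` the law of `|p-walk|`
started at `z`. One shows `(a + b) R_k ≤ a B_k + b B_{-k}` on monotone functionals whenever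
`b p^(k-1) ≤ a q^(k-1)`: after one step the weights `(a p, b q)` at `±(k+1)` and `(a q, b p)` at
`±(k-1)` satisfy the same invariant, and what is left over is
`(a - b)(p - q)(R_{k+1} - R_{k-1}) / 2 ≥ 0`, because `R_k` is stochastically increasing along
`k, k + 2, …`. Applied at `k = 1`, `a = b`, this gives the comparison of all finite-dimensional
marginals on upper sets. Since the path laws live on the Polish space `ℕ → ℝ`, inner regularity
by compact sets extends the comparison to all measurable upper sets, and the layer-cake formula
to bounded monotone functionals.
-/

open MeasureTheory ProbabilityTheory Finset

noncomputable def stepDist (p : ℝ) : Measure ℝ :=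
  ENNReal.ofReal p • Measure.dirac 1 + ENNReal.ofReal (1 - p) • Measure.dirac (-1)

theorem IsCompact.isClosed_upperClosure {α : Type*} [TopologicalSpace α] [Preorder α]
    [OrderClosedTopology α] {K : Set α} (hK : IsCompact K) :
    IsClosed (upperClosure K : Set α) := by
  have : CompactSpace K := isCompact_iff_compactSpace.mp hK
  have himage : (upperClosure K : Set α) = Prod.snd '' {q : K × α | (q.1 : α) ≤ q.2} := by
    ext x
    simp [mem_upperClosure]
  rw [himage]
  exact isClosedMap_snd_of_compactSpace _
    (isClosed_le (continuous_subtype_val.comp continuous_fst) continuous_snd)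

theorem IsUpperSet.monotone_indicator_one {α : Type*} [Preorder α] {S : Set α}
    (hS : IsUpperSet S) : Monotone (S.indicator (1 : α → ℝ)) := by
  intro x y hxy
  by_cases hx : x ∈ S
  · simp [Set.indicator_of_mem hx, Set.indicator_of_mem (hS hxy hx)]
  · rw [Set.indicator_of_notMem hx]
    exact Set.indicator_nonneg (fun _ _ => zero_le_one) y

def finPrefix {α : Type*} (N : ℕ) (x : ℕ → α) : Fin N → α := fun i => x i

theorem continuous_finPrefix {α : Type*} [TopologicalSpace α] (N : ℕ) :
    Continuous (finPrefix (α := α) N) :=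
  continuous_pi fun _ => continuous_apply _

theorem iInter_finPrefix_preimage_upperClosure_subset {α : Type*} [TopologicalSpace α]
    [Preorder α] [OrderClosedTopology α] [T2Space α] {F : Set (ℕ → α)} (hF : IsCompact F) :
    ⋂ N, finPrefix N ⁻¹' (upperClosure (finPrefix N '' F) : Set (Fin N → α)) ⊆
      upperClosure F := by
  intro x hx
  simp only [Set.mem_iInter, Set.mem_preimage, SetLike.mem_coe, mem_upperClosure,
    Set.exists_mem_image] at hx
  set t : ℕ → Set (ℕ → α) := fun N => F ∩ {v | finPrefix N v ≤ finPrefix N x}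
  have ht_anti : ∀ N, t (N + 1) ⊆ t N := fun N v ⟨hvF, hv⟩ =>
    ⟨hvF, fun i => hv (Fin.castSucc i)⟩
  have ht_closed : ∀ N, IsClosed (t N) := fun N =>
    hF.isClosed.inter (isClosed_le (continuous_finPrefix N) continuous_const)
  obtain ⟨w, hw⟩ := IsCompact.nonempty_iInter_of_sequence_nonempty_isCompact_isClosed t ht_anti
    (fun N => hx N) (hF.of_isClosed_subset (ht_closed 0) Set.inter_subset_left) ht_closed
  simp only [Set.mem_iInter] at hw
  exact mem_upperClosure.2 ⟨w, (hw 0).1, fun i => (hw (i + 1)).2 ⟨i, i.lt_succ_self⟩⟩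

theorem IsUpperSet.measure_le_of_forall_finPrefix {α : Type*} [TopologicalSpace α]
    [PolishSpace α] [MeasurableSpace α] [BorelSpace α] [Preorder α] [OrderClosedTopology α]
    {ν' ν : Measure (ℕ → α)} [IsFiniteMeasure ν'] [IsFiniteMeasure ν]
    (h : ∀ N (S : Set (Fin N → α)), IsClosed S → IsUpperSet S →
      ν' (finPrefix N ⁻¹' S) ≤ ν (finPrefix N ⁻¹' S))
    {A : Set (ℕ → α)} (hAu : IsUpperSet A) (hA : MeasurableSet A) : ν' A ≤ ν A := by
  refine ENNReal.le_of_forall_pos_le_add fun ε hε _ => ?_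
  obtain ⟨F, hFA, hF, hνF⟩ := hA.exists_isCompact_lt_add (μ := ν') (measure_ne_top ν' A)
    (ENNReal.coe_ne_zero.2 hε.ne')
  set D : ℕ → Set (ℕ → α) :=
    fun N => finPrefix N ⁻¹' (upperClosure (finPrefix N '' F) : Set (Fin N → α))
  have hD_closed : ∀ N, IsClosed (D N) := fun N =>
    ((hF.image (continuous_finPrefix N)).isClosed_upperClosure).preimage (continuous_finPrefix N)
  have hD_anti : Antitone D := by
    refine antitone_nat_of_succ_le fun N x hx => ?_
    obtain ⟨v, ⟨w, hwF, rfl⟩, hwx⟩ := mem_upperClosure.1 hx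
    exact mem_upperClosure.2 ⟨_, ⟨w, hwF, rfl⟩, fun i => hwx (Fin.castSucc i)⟩
  have hD_le : ∀ N, ν' A ≤ ν (D N) + ε := fun N =>
    calc ν' A ≤ ν' F + ε := hνF.le
      _ ≤ ν' (D N) + ε := by gcongr; exact fun x hx => subset_upperClosure ⟨x, hx, rfl⟩
      _ ≤ ν (D N) + ε := by
        gcongr ?_ + _
        exact h N _ (hF.image (continuous_finPrefix N)).isClosed_upperClosure
          (upperClosure _).upper
  calc ν' A ≤ (⨅ N, ν (D N)) + ε := by rw [ENNReal.iInf_add]; exact le_iInf hD_le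
    _ = ν (⋂ N, D N) + ε := by
      rw [hD_anti.measure_iInter (fun N => (hD_closed N).measurableSet.nullMeasurableSet)
        ⟨0, measure_ne_top ν _⟩]
    _ ≤ ν A + ε := by
      gcongr
      exact (iInter_finPrefix_preimage_upperClosure_subset hF).trans (upperClosure_min hFA hAu)

theorem integral_le_integral_of_forall_isUpperSet {α : Type*} [MeasurableSpace α] [Preorder α]
    {ν' ν : Measure α} [IsProbabilityMeasure ν'] [IsProbabilityMeasure ν]
    (h : ∀ A, IsUpperSet A → MeasurableSet A → ν' A ≤ ν A)
    {f : α → ℝ} (hf : Measurable f) (hf_mono : Monotone f) {C : ℝ} (hC : ∀ x, |f x| ≤ C) :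
    ∫ x, f x ∂ν' ≤ ∫ x, f x ∂ν := by
  have hf_int : ∀ (m : Measure α) [IsProbabilityMeasure m], Integrable f m := fun _ _ =>
    .of_bound hf.aestronglyMeasurable C (.of_forall hC)
  set g : α → ℝ := fun x => f x + C
  have hg : Measurable g := hf.add_const C
  have hg_nonneg (m : Measure α) : 0 ≤ᵐ[m] g :=
    .of_forall fun x => by simp only [g, Pi.zero_apply]; linarith [neg_abs_le (f x), hC x]
  have hg_lintegral : ∫⁻ x, .ofReal (g x) ∂ν' ≤ ∫⁻ x, .ofReal (g x) ∂ν := by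
    rw [lintegral_eq_lintegral_meas_lt _ (hg_nonneg ν') hg.aemeasurable,
      lintegral_eq_lintegral_meas_lt _ (hg_nonneg ν) hg.aemeasurable]
    refine lintegral_mono fun t => h _ (fun x y hxy (hx : t < g x) => ?_)
      (measurableSet_lt measurable_const hg)
    exact hx.trans_le (by simp only [g]; linarith [hf_mono hxy])
  have hg_integral : ∫ x, g x ∂ν' ≤ ∫ x, g x ∂ν := by
    rw [integral_eq_lintegral_of_nonneg_ae (hg_nonneg ν') hg.aestronglyMeasurable,
      integral_eq_lintegral_of_nonneg_ae (hg_nonneg ν) hg.aestronglyMeasurable]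
    exact ENNReal.toReal_mono (((hf_int ν).add (integrable_const C)).lintegral_lt_top.ne)
      hg_lintegral
  simpa [g, integral_add (hf_int _) (integrable_const C)] using hg_integral

section WalkExpectation

/-- `absWalkExp r N z g` is the expectation of `g (|z + S₁|, …, |z + S_N|)`, where `S` is the
walk whose `i`-th step (counted from `0`) is `+1` with probability `r i`. -/
noncomputable def absWalkExp : (ℕ → ℝ) → (N : ℕ) → ℤ → ((Fin N → ℝ) → ℝ) → ℝ
  | _, 0, _, g => g Fin.elim0
  | r, N + 1, z, g =>
      r 0 * absWalkExp (fun i => r (i + 1)) N (z + 1)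
          (fun v => g (Fin.cons ((z + 1).natAbs : ℝ) v)) +
        (1 - r 0) * absWalkExp (fun i => r (i + 1)) N (z - 1)
          (fun v => g (Fin.cons ((z - 1).natAbs : ℝ) v))

variable {p : ℝ}

theorem absWalkExp_const_succ {N : ℕ} (z : ℤ) (g : (Fin (N + 1) → ℝ) → ℝ) :
    absWalkExp (fun _ => p) (N + 1) z g =
      p * absWalkExp (fun _ => p) N (z + 1) (fun v => g (Fin.cons ((z + 1).natAbs : ℝ) v)) +
        (1 - p) * absWalkExp (fun _ => p) N (z - 1)
          (fun v => g (Fin.cons ((z - 1).natAbs : ℝ) v)) :=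
  rfl

theorem absWalkExp_const_mono (hp : p ∈ Set.Icc (0 : ℝ) 1) :
    ∀ {N : ℕ} (z : ℤ) {g g' : (Fin N → ℝ) → ℝ}, (∀ v, g v ≤ g' v) →
      absWalkExp (fun _ => p) N z g ≤ absWalkExp (fun _ => p) N z g'
  | 0, _, _, _, h => h _
  | N + 1, z, _, _, h => by
    rw [absWalkExp_const_succ, absWalkExp_const_succ]
    gcongr
    · exact hp.1
    · exact absWalkExp_const_mono hp _ fun _ => h _
    · linarith [hp.2]
    · exact absWalkExp_const_mono hp _ fun _ => h _

theorem absWalkExp_const_neg : ∀ {N : ℕ} (z : ℤ) (g : (Fin N → ℝ) → ℝ),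
    absWalkExp (fun _ => p) N (-z) g = absWalkExp (fun _ => 1 - p) N z g
  | 0, _, _ => rfl
  | N + 1, z, g => by
    rw [absWalkExp_const_succ, absWalkExp_const_succ, show -z + 1 = -(z - 1) by ring,
      show -z - 1 = -(z + 1) by ring, absWalkExp_const_neg, absWalkExp_const_neg,
      Int.natAbs_neg, Int.natAbs_neg, sub_sub_cancel]
    ring

theorem absWalkExp_half_neg {N : ℕ} (z : ℤ) (g : (Fin N → ℝ) → ℝ) :
    absWalkExp (fun _ => 1 / 2) N (-z) g = absWalkExp (fun _ => 1 / 2) N z g := by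
  rw [absWalkExp_const_neg]; norm_num

theorem Monotone.comp_finCons {N : ℕ} {g : (Fin (N + 1) → ℝ) → ℝ} (hg : Monotone g) (c : ℝ) :
    Monotone fun v : Fin N → ℝ => g (Fin.cons c v) :=
  fun _ _ hv => hg (Fin.cons_le_cons.2 ⟨le_rfl, hv⟩)

theorem apply_finCons_le_of_le {N : ℕ} {g g' : (Fin (N + 1) → ℝ) → ℝ}
    (h : ∀ v, g v ≤ g' v) (hg' : Monotone g') {c c' : ℝ} (hc : c ≤ c') (v : Fin N → ℝ) :
    g (Fin.cons c v) ≤ g' (Fin.cons c' v) :=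
  (h _).trans (hg' (Fin.cons_le_cons.2 ⟨hc, le_rfl⟩))

theorem absWalkExp_half_le_add_two : ∀ {N : ℕ} {z : ℤ}, 0 ≤ z → ∀ {g g' : (Fin N → ℝ) → ℝ},
    (∀ v, g v ≤ g' v) → Monotone g' →
      absWalkExp (fun _ => 1 / 2) N z g ≤ absWalkExp (fun _ => 1 / 2) N (z + 2) g'
  | 0, _, _, _, _, h, _ => h _
  | N + 1, z, hz, g, g', h, hg' => by
    have hcons {a b : ℤ} (hab : a.natAbs ≤ b.natAbs) (v : Fin N → ℝ) :
        g (Fin.cons (a.natAbs : ℝ) v) ≤ g' (Fin.cons (b.natAbs : ℝ) v) :=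
      apply_finCons_le_of_le h hg' (by exact_mod_cast hab) v
    rw [absWalkExp_const_succ, absWalkExp_const_succ]
    obtain rfl | hz := hz.eq_or_lt
    · have h1 := absWalkExp_half_le_add_two (z := 1) zero_le_one
        (hcons (a := 1) (b := 3) (by decide)) (hg'.comp_finCons _)
      have h2 := absWalkExp_const_mono (p := 1 / 2) (by norm_num) 1
        (hcons (a := 1) (b := 1) le_rfl)
      rw [← absWalkExp_half_neg] at h2
      norm_num at h1 h2 ⊢
      linarith
    · have h1 := absWalkExp_half_le_add_two (z := z + 1) (by omega)
        (hcons (a := z + 1) (b := z + 1 + 2) (by omega)) (hg'.comp_finCons _)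
      have h2 := absWalkExp_half_le_add_two (z := z - 1) (by omega)
        (hcons (a := z - 1) (b := z - 1 + 2) (by omega)) (hg'.comp_finCons _)
      rw [show z + 2 + 1 = z + 1 + 2 by ring, show z + 2 - 1 = z - 1 + 2 by ring]
      linarith

theorem absWalkExp_half_le_mixture (hp : 1 / 2 ≤ p) (hp1 : p ≤ 1) : ∀ {N : ℕ} (k : ℕ)
    {g : (Fin N → ℝ) → ℝ}, Monotone g → ∀ {a b : ℝ}, 0 ≤ a → 0 ≤ b →
      (k = 0 ∨ b * p ^ (k - 1) ≤ a * (1 - p) ^ (k - 1)) →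
      (a + b) * absWalkExp (fun _ => 1 / 2) N k g ≤
        a * absWalkExp (fun _ => p) N k g + b * absWalkExp (fun _ => p) N (-k) g
  | 0, _, _, _, _, _, _, _, _ => (add_mul _ _ _).le
  | N + 1, 0, g, hg, a, b, ha, hb, _ => by
    have h := absWalkExp_half_le_mixture hp hp1 1 (hg.comp_finCons 1) (a := (a + b) * p)
      (b := (a + b) * (1 - p)) (by positivity) (mul_nonneg (add_nonneg ha hb) (by linarith))
      (Or.inr (by
        simpa using mul_le_mul_of_nonneg_left (by linarith : 1 - p ≤ p) (add_nonneg ha hb)))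
    rw [Nat.cast_zero, neg_zero, absWalkExp_const_succ, absWalkExp_const_succ, zero_sub,
      absWalkExp_half_neg]
    norm_num at h ⊢
    linarith
  | N + 1, k + 1, g, hg, a, b, ha, hb, hinv => by
    replace hinv : b * p ^ k ≤ a * (1 - p) ^ k := by simpa using hinv
    have hpq : 0 ≤ p * (1 - p) := mul_nonneg (by linarith) (by linarith)
    have hab : b ≤ a := by
      refine le_of_mul_le_mul_right (hinv.trans ?_) (pow_pos (by linarith) k)
      exact mul_le_mul_of_nonneg_left (pow_le_pow_left₀ (by linarith) (by linarith) k) ha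
    rw [absWalkExp_const_succ, absWalkExp_const_succ, absWalkExp_const_succ,
      show ((k + 1 : ℕ) : ℤ) + 1 = (k + 2 : ℕ) by push_cast; ring,
      show ((k + 1 : ℕ) : ℤ) - 1 = k by push_cast; ring,
      show -((k + 1 : ℕ) : ℤ) + 1 = -k by push_cast; ring,
      show -((k + 1 : ℕ) : ℤ) - 1 = -(k + 2 : ℕ) by push_cast; ring]
    simp only [Int.natAbs_neg]
    set Gup := fun v => g (Fin.cons (((k + 2 : ℕ) : ℤ).natAbs : ℝ) v)
    set Gdown := fun v => g (Fin.cons ((k : ℤ).natAbs : ℝ) v)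
    have hGup : Monotone Gup := hg.comp_finCons _
    have hGdown : Monotone Gdown := hg.comp_finCons _
    have hup := absWalkExp_half_le_mixture hp hp1 (k + 2) hGup (a := a * p) (b := b * (1 - p))
      (by positivity) (by nlinarith) (Or.inr (by
        rw [show k + 2 - 1 = k + 1 from rfl]
        linear_combination mul_le_mul_of_nonneg_right hinv hpq))
    have hdown := absWalkExp_half_le_mixture hp hp1 k hGdown (a := a * (1 - p)) (b := b * p)
      (by nlinarith) (by positivity) (by
        rcases k with _ | k
        · exact Or.inl rfl
        · right
          rw [Nat.add_sub_cancel]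
          linear_combination hinv)
    have hshift := absWalkExp_half_le_add_two (Nat.cast_nonneg k) (g := Gdown) (g' := Gup)
      (apply_finCons_le_of_le (fun _ => le_rfl) hg (by exact_mod_cast (by omega))) hGup
    rw [show (k : ℤ) + 2 = (k + 2 : ℕ) by push_cast; ring] at hshift
    have hdefect := mul_nonneg (mul_nonneg (sub_nonneg.2 hab) (by linarith : (0 : ℝ) ≤ 2 * p - 1))
      (sub_nonneg.2 hshift)
    linear_combination hup + hdown + (1 / 2) * hdefect

theorem absWalkExp_half_add_le (hp : 1 / 2 ≤ p) (hp1 : p ≤ 1) {N : ℕ} {g : (Fin N → ℝ) → ℝ}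
    (hg : Monotone g) :
    absWalkExp (fun _ => 1 / 2) N 1 g + absWalkExp (fun _ => 1 / 2) N (-1) g ≤
      absWalkExp (fun _ => p) N 1 g + absWalkExp (fun _ => p) N (-1) g := by
  have h := absWalkExp_half_le_mixture hp hp1 1 hg zero_le_one zero_le_one (Or.inr (by simp))
  rw [absWalkExp_half_neg]
  norm_num at h
  linarith

end WalkExpectation

def boolSign (b : Bool) : ℝ := if b then 1 else -1

def stepWeight (r : ℝ) (b : Bool) : ℝ := if b then r else 1 - r

theorem stepWeight_nonneg {r : ℝ} (hr : r ∈ Set.Icc (0 : ℝ) 1) (b : Bool) :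
    0 ≤ stepWeight r b := by
  cases b <;> simp [stepWeight, hr.1, hr.2]

def absPath : {N : ℕ} → ℝ → (Fin N → ℝ) → Fin N → ℝ
  | 0, _, _ => Fin.elim0
  | _ + 1, x, v => Fin.cons |x + v 0| (absPath (x + v 0) (Fin.tail v))

theorem continuous_absPath : ∀ {N : ℕ}, Continuous fun q : ℝ × (Fin N → ℝ) => absPath q.1 q.2
  | 0 => continuous_of_const fun _ _ => funext fun i => i.elim0
  | N + 1 => by
    have h0 : Continuous fun q : ℝ × (Fin (N + 1) → ℝ) => q.1 + q.2 0 := by fun_prop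
    exact (continuous_abs.comp h0).finCons (continuous_absPath.comp
      (h0.prodMk (continuous_pi fun _ => (continuous_apply _).comp continuous_snd)))

theorem measurable_absPath {N : ℕ} (x : ℝ) : Measurable (absPath (N := N) x) :=
  (continuous_absPath.comp (Continuous.prodMk_right x)).measurable

theorem finPrefix_absPartialSums : ∀ (N : ℕ) (x : ℝ) (y : ℕ → ℝ),
    finPrefix N (fun n => |x + ∑ i ∈ range (n + 1), y i|) = absPath x (finPrefix N y)
  | 0, _, _ => funext fun i => i.elim0
  | N + 1, x, y => by
    ext n
    refine Fin.cases ?_ (fun m => ?_) n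
    · simp [finPrefix, absPath]
    · change |x + ∑ i ∈ range (m + 1 + 1), y i| =
        absPath (x + y 0) (finPrefix N fun i => y (i + 1)) m
      rw [← finPrefix_absPartialSums, finPrefix, sum_range_succ', add_comm _ (y 0), add_assoc]

theorem sum_prod_stepWeight_mul_eq_absWalkExp : ∀ (r : ℕ → ℝ) (N : ℕ) (z : ℤ)
    (g : (Fin N → ℝ) → ℝ),
    ∑ ε : Fin N → Bool, (∏ i : Fin N, stepWeight (r i) (ε i)) *
        g (absPath z fun i => boolSign (ε i)) = absWalkExp r N z g
  | _, 0, _, _ => by simp [absWalkExp, absPath]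
  | r, N + 1, z, g => by
    rw [← (Fin.consEquiv fun _ => Bool).sum_comp, Fintype.sum_prod_type, Fintype.sum_bool]
    simp only [Fin.consEquiv_apply, Fin.prod_univ_succ, Fin.cons_zero, Fin.cons_succ, mul_assoc,
      ← Finset.mul_sum, absPath, Fin.val_succ, Fin.val_zero]
    rw [absWalkExp]
    congr 2 <;> rw [← sum_prod_stepWeight_mul_eq_absWalkExp] <;>
      simp [boolSign, Fin.tail_def, Nat.cast_natAbs, sub_eq_add_neg]

theorem stepDist_eq_sum (r : ℝ) :
    stepDist r = ∑ b, ENNReal.ofReal (stepWeight r b) • Measure.dirac (boolSign b) := by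
  simp [stepDist, stepWeight, boolSign]

instance (r : ℝ) : IsFiniteMeasure (stepDist r) :=
  ⟨by simp [stepDist]⟩

theorem MeasureTheory.Measure.dirac_apply_univ_pi {ι : Type*} [Fintype ι] {X : ι → Type*}
    [∀ i, MeasurableSpace (X i)] (a : ∀ i, X i) {s : ∀ i, Set (X i)}
    (hs : ∀ i, MeasurableSet (s i)) :
    Measure.dirac a (Set.univ.pi s) = ∏ i, Measure.dirac (a i) (s i) := by
  by_cases h : ∀ i, a i ∈ s i
  · rw [Measure.dirac_apply_of_mem (Set.mem_univ_pi.2 h),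
      Finset.prod_eq_one fun i _ => Measure.dirac_apply_of_mem (h i)]
  · obtain ⟨i, hi⟩ := not_forall.1 h
    rw [Measure.dirac_apply' _ (.univ_pi hs), Set.indicator_of_notMem
      (fun ha => hi (Set.mem_univ_pi.1 ha i)), Finset.prod_eq_zero (Finset.mem_univ i)
      (by rw [Measure.dirac_apply' _ (hs i), Set.indicator_of_notMem hi])]

theorem pi_stepDist {N : ℕ} (r : Fin N → ℝ) :
    Measure.pi (fun i => stepDist (r i)) =
      ∑ ε : Fin N → Bool, (∏ i, ENNReal.ofReal (stepWeight (r i) (ε i))) •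
        Measure.dirac (fun i => boolSign (ε i)) := by
  refine Measure.pi_eq fun s hs => ?_
  simp only [Measure.coe_finsetSum, Finset.sum_apply, Measure.smul_apply, smul_eq_mul,
    Measure.dirac_apply_univ_pi _ hs, ← Finset.prod_mul_distrib, stepDist_eq_sum]
  rw [Fintype.prod_sum]

theorem stepDist_map_neg (r : ℝ) : (stepDist r).map (fun x => -x) = stepDist (1 - r) := by
  simp [stepDist, Measure.map_add _ _ measurable_neg, Measure.map_smul,
    Measure.map_dirac' measurable_neg, add_comm]

theorem map_neg_eq_stepDist {Ω : Type*} [MeasurableSpace Ω] {μ : Measure Ω} {X : Ω → ℝ}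
    (hX : Measurable X) {r : ℝ} (hlaw : μ.map X = stepDist r) :
    μ.map (fun ω => -X ω) = stepDist (1 - r) := by
  rw [← stepDist_map_neg, ← hlaw, Measure.map_map measurable_neg hX]
  rfl

def absWalk {Ω : Type*} (Y : ℕ → Ω → ℝ) (ω : Ω) (n : ℕ) : ℝ := |∑ i ∈ range (n + 1), Y i ω|

theorem measurable_absWalk {Ω : Type*} [MeasurableSpace Ω] {Y : ℕ → Ω → ℝ}
    (hY : ∀ i, Measurable (Y i)) : Measurable (absWalk Y) :=
  measurable_pi_lambda _ fun _ => (Finset.measurable_sum _ fun i _ => hY i).abs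

theorem absWalk_neg {Ω : Type*} (Y : ℕ → Ω → ℝ) : absWalk (fun i => -Y i) = absWalk Y := by
  ext ω n
  simp [absWalk]

theorem map_absWalk_finPrefix_preimage {Ω : Type*} [MeasurableSpace Ω] {μ : Measure Ω}
    {Y : ℕ → Ω → ℝ} (hY : ∀ i, Measurable (Y i)) (hind : iIndepFun Y μ)
    {r : ℕ → ℝ} (hr : ∀ i, r i ∈ Set.Icc (0 : ℝ) 1) (hlaw : ∀ i, μ.map (Y i) = stepDist (r i))
    (N : ℕ) {S : Set (Fin N → ℝ)} (hS : MeasurableSet S) :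
    μ.map (absWalk Y) (finPrefix N ⁻¹' S) = .ofReal (absWalkExp r N 0 (S.indicator 1)) := by
  have hYN : Measurable fun ω (i : Fin N) => Y i ω := measurable_pi_lambda _ fun i => hY i
  have hpre : absWalk Y ⁻¹' (finPrefix N ⁻¹' S) =
      (fun ω (i : Fin N) => Y i ω) ⁻¹' (absPath 0 ⁻¹' S) := by
    ext ω
    have h := finPrefix_absPartialSums N 0 fun i => Y i ω
    simp only [zero_add] at h
    exact Iff.of_eq (congrArg (· ∈ S) h)
  rw [Measure.map_apply (measurable_absWalk hY) ((continuous_finPrefix N).measurable hS), hpre,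
    ← Measure.map_apply hYN (measurable_absPath 0 hS),
    iIndepFun.map_fun_eq_pi_map (f := fun i : Fin N => Y i) (fun i => (hY i).aemeasurable)
      (hind.precomp Fin.val_injective)]
  simp only [hlaw, pi_stepDist, Measure.coe_finsetSum, Finset.sum_apply, Measure.smul_apply,
    smul_eq_mul, Measure.dirac_apply, ← sum_prod_stepWeight_mul_eq_absWalkExp, Int.cast_zero]
  have hweight (ε : Fin N → Bool) : 0 ≤ ∏ i : Fin N, stepWeight (r i) (ε i) :=
    Finset.prod_nonneg fun i _ => stepWeight_nonneg (hr i) _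
  have hS_nonneg (v : Fin N → ℝ) : 0 ≤ S.indicator (1 : (Fin N → ℝ) → ℝ) v :=
    Set.indicator_nonneg (fun _ _ => zero_le_one) v
  rw [ENNReal.ofReal_sum_of_nonneg fun ε _ => mul_nonneg (hweight ε) (hS_nonneg _)]
  refine Finset.sum_congr rfl fun ε _ => ?_
  rw [ENNReal.ofReal_mul (hweight ε),
    ENNReal.ofReal_prod_of_nonneg fun (i : Fin N) _ => stepWeight_nonneg (hr i) _]
  by_cases h : absPath 0 (fun i => boolSign (ε i)) ∈ S <;> simp [h]

theorem integral_absWalk_half_le_of_half_le {Ω' Ω : Type*} [MeasurableSpace Ω']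
    [MeasurableSpace Ω] {μ' : Measure Ω'} {μ : Measure Ω}
    [IsProbabilityMeasure μ'] [IsProbabilityMeasure μ]
    {p : ℝ} (hp : 1 / 2 ≤ p) (hp1 : p ≤ 1) {Y' : ℕ → Ω' → ℝ} {Y : ℕ → Ω → ℝ}
    (hY'meas : ∀ i, Measurable (Y' i)) (hYmeas : ∀ i, Measurable (Y i))
    (hY'indep : iIndepFun Y' μ') (hYindep : iIndepFun Y μ)
    (hY'dist : ∀ i, μ'.map (Y' i) = stepDist (1 / 2))
    (hYdist : ∀ i, μ.map (Y i) = stepDist (if i = 0 then 1 / 2 else p))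
    {f : (ℕ → ℝ) → ℝ} (hfmeas : Measurable f) (hfmono : Monotone f) {C : ℝ}
    (hfbdd : ∀ x, |f x| ≤ C) :
    ∫ ω, f (absWalk Y' ω) ∂μ' ≤ ∫ ω, f (absWalk Y ω) ∂μ := by
  have : IsProbabilityMeasure (μ'.map (absWalk Y')) :=
    Measure.isProbabilityMeasure_map (measurable_absWalk hY'meas).aemeasurable
  have : IsProbabilityMeasure (μ.map (absWalk Y)) :=
    Measure.isProbabilityMeasure_map (measurable_absWalk hYmeas).aemeasurable
  rw [← integral_map (measurable_absWalk hY'meas).aemeasurable hfmeas.aestronglyMeasurable,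
    ← integral_map (measurable_absWalk hYmeas).aemeasurable hfmeas.aestronglyMeasurable]
  refine integral_le_integral_of_forall_isUpperSet (fun A hAu hA => ?_) hfmeas hfmono hfbdd
  refine hAu.measure_le_of_forall_finPrefix (fun N S hS hSu => ?_) hA
  rw [map_absWalk_finPrefix_preimage hY'meas hY'indep (fun _ => by norm_num) hY'dist N
      hS.measurableSet,
    map_absWalk_finPrefix_preimage hYmeas hYindep
      (fun i => by split_ifs <;> constructor <;> linarith) hYdist N hS.measurableSet]
  refine ENNReal.ofReal_le_ofReal ?_
  rcases N with _ | N
  · exact le_rfl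
  · have h := absWalkExp_half_add_le hp hp1 (hSu.monotone_indicator_one.comp_finCons 1)
    simp only [absWalkExp, Nat.add_one_ne_zero, if_false, if_true]
    norm_num at h ⊢
    linarith

theorem half_walk_abs_stochastically_minimal_general
    {Ω' Ω : Type*} [MeasurableSpace Ω'] [MeasurableSpace Ω]
    (μ' : Measure Ω') (μ : Measure Ω)
    [IsProbabilityMeasure μ'] [IsProbabilityMeasure μ]
    (p : ℝ) (hp : p ∈ Set.Icc (0 : ℝ) 1)
    (Y' : ℕ → Ω' → ℝ) (Y : ℕ → Ω → ℝ)
    (hY'meas : ∀ i, Measurable (Y' i)) (hYmeas : ∀ i, Measurable (Y i))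
    (hY'indep : iIndepFun Y' μ')
    (hYindep : iIndepFun Y μ)
    (hY'0dist : Measure.map (Y' 0) μ' = stepDist (1/2))
    (hY0dist : Measure.map (Y 0) μ = stepDist (1/2))
    (hY'dist : ∀ i, Measure.map (Y' (i + 1)) μ' = stepDist (1/2))
    (hYdist : ∀ i, Measure.map (Y (i + 1)) μ = stepDist p)
    (f : (ℕ → ℝ) → ℝ) (hfmeas : Measurable f) (hfmono : Monotone f)
    (C : ℝ) (hfbdd : ∀ x, |f x| ≤ C) :
    ∫ ω, f (fun n => |∑ i ∈ Finset.range (n + 1), Y' i ω|) ∂μ'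
      ≤ ∫ ω, f (fun n => |∑ i ∈ Finset.range (n + 1), Y i ω|) ∂μ := by
  have hY'law (i : ℕ) : μ'.map (Y' i) = stepDist (1 / 2) := by
    cases i
    exacts [hY'0dist, hY'dist _]
  rcases le_total (1 / 2) p with hp2 | hp2
  · have hYlaw (i : ℕ) : μ.map (Y i) = stepDist (if i = 0 then 1 / 2 else p) := by
      cases i <;> simp [hY0dist, hYdist]
    exact integral_absWalk_half_le_of_half_le hp2 hp.2 hY'meas hYmeas hY'indep hYindep hY'law
      hYlaw hfmeas hfmono hfbdd
  · have hYlaw (i : ℕ) :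
        μ.map (fun ω => -Y i ω) = stepDist (if i = 0 then 1 / 2 else 1 - p) := by
      cases i
      · rw [map_neg_eq_stepDist (hYmeas 0) hY0dist]
        norm_num
      · simp [map_neg_eq_stepDist (hYmeas _) (hYdist _)]
    have h := integral_absWalk_half_le_of_half_le (by linarith) (by linarith [hp.1]) hY'meas
      (fun i => (hYmeas i).neg) hY'indep (hYindep.comp (fun _ x => -x) fun _ => measurable_neg)
      hY'law hYlaw hfmeas hfmono hfbdd
    rwa [absWalk_neg] at h

/-- **Theorem 2.** Consider the walk `U^p_n = X_0 + S^p_n` with random initial state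
`X_0 = ±1` with equal probabilities, independent of the increments.  Here the walk with
parameter `p` is modelled by `Y 0 = X_0` and increments `Y 1, Y 2, …`, all independent, with
`Y 0 ~ stepDist (1/2)` and `Y (i+1) ~ stepDist p`, so that `U^p_n = ∑_{i ≤ n} Y i`.
For `p' = 1/2` and any `p ∈ [0,1]` with `p ≠ 1/2`, the process `(|U^{p'}_n|)_{n ≥ 0}`
is stochastically smaller than `(|U^{p}_n|)_{n ≥ 0}`; consequently `(|U^{p}_n|)_{n ≥ 0}` is
stochastically minimized over `p ∈ [0,1]` by `p = 1/2`. -/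
theorem half_walk_abs_stochastically_minimal
    {Ω' Ω : Type*} [MeasurableSpace Ω'] [MeasurableSpace Ω]
    (μ' : Measure Ω') (μ : Measure Ω)
    [IsProbabilityMeasure μ'] [IsProbabilityMeasure μ]
    (p : ℝ) (hp : p ∈ Set.Icc (0 : ℝ) 1) (hphalf : p ≠ 1/2)
    (Y' : ℕ → Ω' → ℝ) (Y : ℕ → Ω → ℝ)
    (hY'meas : ∀ i, Measurable (Y' i)) (hYmeas : ∀ i, Measurable (Y i))
    (hY'indep : iIndepFun Y' μ')
    (hYindep : iIndepFun Y μ)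
    (hY'0dist : Measure.map (Y' 0) μ' = stepDist (1/2))
    (hY0dist : Measure.map (Y 0) μ = stepDist (1/2))
    (hY'dist : ∀ i, Measure.map (Y' (i + 1)) μ' = stepDist (1/2))
    (hYdist : ∀ i, Measure.map (Y (i + 1)) μ = stepDist p)
    (f : (ℕ → ℝ) → ℝ) (hfmeas : Measurable f) (hfmono : Monotone f)
    (C : ℝ) (hfbdd : ∀ x, |f x| ≤ C) :
    ∫ ω, f (fun n => |∑ i ∈ Finset.range (n + 1), Y' i ω|) ∂μ'
      ≤ ∫ ω, f (fun n => |∑ i ∈ Finset.range (n + 1), Y i ω|) ∂μ :=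
  half_walk_abs_stochastically_minimal_general μ' μ p hp Y' Y hY'meas hYmeas hY'indep hYindep
    hY'0dist hY0dist hY'dist hYdist f hfmeas hfmono C hfbdd
end

section
/- For non-negative integers b_n (n ≥ 1), the stopping time T^p = inf{n ≥ 1 : |S_n^p| ≥ b_n} is stochastically increasing in p ∈ [0,1/2] and stochastically decreasing in p ∈ [1/2,1]; that is, for |p' - 1/2| > |p'' - 1/2| and every m ≥ 1, P(T^{p'} > m) ≤ P(T^{p''} > m). -/
/-!
Given the path of `|S|` up to time `n`, the sign of `S_n` is `+` with odds
`p ^ |S_n| : (1 - p) ^ |S_n|`: a path and its mirror image after the last visit to `0` have these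
relative weights. Hence `|S|` is a Markov chain that steps up from `x ≥ 1` with probability
`(p ^ (x + 1) + q ^ (x + 1)) / (p ^ x + q ^ x)` (and from `0` surely), and `T` is its exit time
from `{x < b_n}`. This up-probability increases with `x` and decreases with
`pq = 1/4 - (p - 1/2) ^ 2`. Backward induction shows that the survival probability of `|S|` from
height `x` decreases along `x ↦ x + 2` (the heights reachable at a given time share a parity),
so raising the up-probabilities, i.e. raising `|p - 1/2|`, can only lower it.

The Markov property of `|S|` is used only through the identity that
`∑ₓ P(T > n, S_n = x) V_{m-n}(|x|)`, with `V_j` the survival function of `|S|` with `j` steps to go,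
does not depend on `n`; at `n = 0` and `n = m` it gives `P(T > m) = V_m(0)`.
-/

open MeasureTheory ProbabilityTheory Finset

namespace BernoulliWalk

lemma mul_add_one_sub_mul_le_mul_add_one_sub_mul {s t A B : ℝ} (hts : t ≤ s) (hAB : A ≤ B) :
    s * A + (1 - s) * B ≤ t * A + (1 - t) * B := by
  nlinarith

lemma le_natAbs_pred_of_add_two_le {g : ℕ → ℝ} (hg : ∀ y, g (y + 2) ≤ g y) (x : ℕ) :
    g (x + 1) ≤ g ((x : ℤ) - 1).natAbs := by
  cases x with
  | zero => rfl
  | succ x => simpa using hg x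

lemma indicator_add_two_le {c : ℕ} {g : ℕ → ℝ} (hg0 : ∀ y, 0 ≤ g y)
    (hg : ∀ y, g (y + 2) ≤ g y) (y : ℕ) :
    (Set.Iio c).indicator g (y + 2) ≤ (Set.Iio c).indicator g y := by
  by_cases hy : y + 2 < c
  · rw [Set.indicator_of_mem (Set.mem_Iio.2 hy), Set.indicator_of_mem (Set.mem_Iio.2 (by omega))]
    exact hg y
  · rw [Set.indicator_of_notMem (s := Set.Iio c) hy]
    exact Set.indicator_nonneg (fun y _ => hg0 y) y

lemma sum_Icc_comp_add {F : ℤ → ℝ} {M : ℕ} {d : ℤ}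
    (hF : ∀ x, F x ≠ 0 → x.natAbs + d.natAbs ≤ M) :
    ∑ x ∈ Icc (-(M : ℤ)) M, F (x + d) = ∑ x ∈ Icc (-(M : ℤ)) M, F x := by
  have hcore : ∀ lo hi : ℤ, -(M : ℤ) + d.natAbs ≥ lo → (M : ℤ) - d.natAbs ≤ hi →
      ∑ x ∈ Icc (-(M : ℤ) + d.natAbs) (M - d.natAbs), F x = ∑ x ∈ Icc lo hi, F x := by
    intro lo hi hlo hhi
    refine sum_subset (Icc_subset_Icc (by omega) hhi) fun x _ hx => ?_
    by_contra h
    have := hF x h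
    simp only [mem_Icc] at hx
    omega
  have hshift :
      ∑ x ∈ Icc (-(M : ℤ)) M, F (x + d) = ∑ x ∈ Icc (-(M : ℤ) + d) (M + d), F x := by
    rw [← map_add_right_Icc, sum_map]; rfl
  rw [hshift, ← hcore (-M + d) (M + d) (by omega) (by omega), hcore (-M) M (by omega) (by omega)]

lemma exists_sum_range_eq_intCast {f : ℕ → ℝ} (hf : ∀ i, f i = 1 ∨ f i = -1) :
    ∀ n, ∃ x : ℤ, x.natAbs ≤ n ∧ ∑ i ∈ range n, f i = x
  | 0 => ⟨0, le_rfl, by simp⟩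
  | n + 1 => by
    obtain ⟨x, hxn, hx⟩ := exists_sum_range_eq_intCast hf n
    rcases hf n with h | h
    · exact ⟨x + 1, by omega, by rw [sum_range_succ, hx, h]; push_cast; ring⟩
    · exact ⟨x - 1, by omega, by rw [sum_range_succ, hx, h]; push_cast; ring⟩

lemma abs_intCast_lt_natCast_iff {x : ℤ} {c : ℕ} : |(x : ℝ)| < c ↔ x.natAbs < c := by
  rw [← Int.cast_abs, ← Nat.cast_natAbs, Nat.cast_lt]

lemma measure_eq_inter_add_inter {Ω : Type*} [MeasurableSpace Ω] {μ : Measure Ω}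
    {Y : Ω → ℝ} (hY : Measurable Y) (hae : ∀ᵐ ω ∂μ, Y ω = 1 ∨ Y ω = -1) (A : Set Ω) :
    μ A = μ (A ∩ Y ⁻¹' {1}) + μ (A ∩ Y ⁻¹' {-1}) := by
  rw [← measure_inter_add_sdiff A (hY (measurableSet_singleton 1))]
  congr 1
  refine measure_congr (Filter.eventuallyEq_set.2 (hae.mono fun ω hω => ?_))
  simp only [Set.mem_sdiff, Set.mem_inter_iff, Set.mem_preimage, Set.mem_singleton_iff]
  rcases hω with h | h <;> norm_num [h]

def powSum (p : ℝ) (x : ℕ) : ℝ := p ^ x + (1 - p) ^ x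

noncomputable def upProb (p : ℝ) (x : ℕ) : ℝ := powSum p (x + 1) / powSum p x

section upProb

variable {p : ℝ}

lemma powSum_pos (hp : p ∈ Set.Icc (0 : ℝ) 1) (x : ℕ) : 0 < powSum p x := by
  obtain ⟨hp0, hp1⟩ := hp
  rcases le_total p (1 / 2) with h | h
  · exact add_pos_of_nonneg_of_pos (pow_nonneg hp0 x) (pow_pos (by linarith) x)
  · exact add_pos_of_pos_of_nonneg (pow_pos (by linarith) x) (pow_nonneg (by linarith) x)

lemma upProb_nonneg (hp : p ∈ Set.Icc (0 : ℝ) 1) (x : ℕ) : 0 ≤ upProb p x :=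
  div_nonneg (powSum_pos hp _).le (powSum_pos hp _).le

lemma upProb_le_one (hp : p ∈ Set.Icc (0 : ℝ) 1) (x : ℕ) : upProb p x ≤ 1 := by
  obtain ⟨hp0, hp1⟩ := hp
  refine div_le_one_of_le₀ ?_ (powSum_pos ⟨hp0, hp1⟩ x).le
  have h₁ : p ^ (x + 1) ≤ p ^ x := pow_le_pow_of_le_one hp0 hp1 x.le_succ
  have h₂ : (1 - p) ^ (x + 1) ≤ (1 - p) ^ x :=
    pow_le_pow_of_le_one (by linarith) (by linarith) x.le_succ
  exact add_le_add h₁ h₂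

lemma upProb_monotone (hp : p ∈ Set.Icc (0 : ℝ) 1) : Monotone (upProb p) := by
  refine monotone_nat_of_le_succ fun x => ?_
  rw [upProb, upProb, div_le_div_iff₀ (powSum_pos hp _) (powSum_pos hp _)]
  have key : powSum p (x + 1 + 1) * powSum p x - powSum p (x + 1) * powSum p (x + 1)
      = p ^ x * (1 - p) ^ x * (2 * p - 1) ^ 2 := by
    unfold powSum; ring
  rw [← sub_nonneg, key]
  exact mul_nonneg (mul_nonneg (pow_nonneg hp.1 x) (pow_nonneg (sub_nonneg.2 hp.2) x))
    (sq_nonneg _)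

lemma powSum_add_two (p : ℝ) (x : ℕ) :
    powSum p (x + 2) = powSum p (x + 1) - p * (1 - p) * powSum p x := by
  unfold powSum; ring

end upProb

lemma powSum_succ_mul_le {p' p'' : ℝ} (hp' : p' ∈ Set.Icc (0 : ℝ) 1)
    (hp'' : p'' ∈ Set.Icc (0 : ℝ) 1) (hq : p' * (1 - p') ≤ p'' * (1 - p'')) (x : ℕ) :
    powSum p'' (x + 1) * powSum p' x ≤ powSum p' (x + 1) * powSum p'' x := by
  induction x with
  | zero => simp [powSum]
  | succ x ih =>
    have key : powSum p' (x + 2) * powSum p'' (x + 1) - powSum p'' (x + 2) * powSum p' (x + 1)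
        = p'' * (1 - p'') * (powSum p' (x + 1) * powSum p'' x - powSum p'' (x + 1) * powSum p' x)
          + (p'' * (1 - p'') - p' * (1 - p')) * (powSum p' x * powSum p'' (x + 1)) := by
      rw [powSum_add_two, powSum_add_two]; ring
    have hq'' : 0 ≤ p'' * (1 - p'') := mul_nonneg hp''.1 (sub_nonneg.2 hp''.2)
    linarith [mul_nonneg hq'' (sub_nonneg.2 ih), mul_nonneg (sub_nonneg.2 hq)
      (mul_nonneg (powSum_pos hp' x).le (powSum_pos hp'' (x + 1)).le)]

lemma upProb_le_upProb {p' p'' : ℝ} (hp' : p' ∈ Set.Icc (0 : ℝ) 1)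
    (hp'' : p'' ∈ Set.Icc (0 : ℝ) 1) (hq : p' * (1 - p') ≤ p'' * (1 - p'')) (x : ℕ) :
    upProb p'' x ≤ upProb p' x := by
  rw [upProb, upProb, div_le_div_iff₀ (powSum_pos hp'' x) (powSum_pos hp' x)]
  exact powSum_succ_mul_le hp' hp'' hq x

/-- `reflSurvival p b m j x` is the probability that `|S|`, at height `x` at time `m - j`, stays
below the boundaries `b` up to time `m`. From `0` a down-step leads to `((0 : ℤ) - 1).natAbs = 1`,
so `upProb p 0` plays no role. -/
noncomputable def reflSurvival (p : ℝ) (b : ℕ → ℕ) (m : ℕ) : ℕ → ℕ → ℝ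
  | 0, _ => 1
  | j + 1, x =>
    upProb p x * (Set.Iio (b (m - j))).indicator (reflSurvival p b m j) (x + 1)
      + (1 - upProb p x)
        * (Set.Iio (b (m - j))).indicator (reflSurvival p b m j) ((x : ℤ) - 1).natAbs

section reflSurvival

variable {p : ℝ} (b : ℕ → ℕ) (m : ℕ)

lemma reflSurvival_nonneg (hp : p ∈ Set.Icc (0 : ℝ) 1) : ∀ j x, 0 ≤ reflSurvival p b m j x
  | 0, _ => zero_le_one
  | j + 1, x => by
    have hW : ∀ y, 0 ≤ (Set.Iio (b (m - j))).indicator (reflSurvival p b m j) y :=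
      Set.indicator_nonneg fun y _ => reflSurvival_nonneg hp j y
    rw [reflSurvival]
    exact add_nonneg (mul_nonneg (upProb_nonneg hp x) (hW _))
      (mul_nonneg (sub_nonneg.2 (upProb_le_one hp x)) (hW _))

lemma reflSurvival_add_two_le (hp : p ∈ Set.Icc (0 : ℝ) 1) :
    ∀ j x, reflSurvival p b m j (x + 2) ≤ reflSurvival p b m j x
  | 0, _ => le_rfl
  | j + 1, x => by
    set W := (Set.Iio (b (m - j))).indicator (reflSurvival p b m j)
    have hW : ∀ y, W (y + 2) ≤ W y := indicator_add_two_le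
      (reflSurvival_nonneg b m hp j) (reflSurvival_add_two_le hp j)
    have hφ : upProb p x ≤ upProb p (x + 2) := upProb_monotone hp (by omega)
    have hφ₁ := upProb_le_one hp x
    calc reflSurvival p b m (j + 1) (x + 2)
        = upProb p (x + 2) * W (x + 3) + (1 - upProb p (x + 2)) * W (x + 1) := by
          rw [reflSurvival]; congr 3; omega
      _ ≤ upProb p x * W (x + 3) + (1 - upProb p x) * W (x + 1) :=
          mul_add_one_sub_mul_le_mul_add_one_sub_mul hφ (hW (x + 1))
      _ ≤ upProb p x * W (x + 1) + (1 - upProb p x) * W ((x : ℤ) - 1).natAbs := by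
          gcongr
          exacts [upProb_nonneg hp x, hW (x + 1), le_natAbs_pred_of_add_two_le hW x]

lemma reflSurvival_le_reflSurvival {p' p'' : ℝ} (hp' : p' ∈ Set.Icc (0 : ℝ) 1)
    (hp'' : p'' ∈ Set.Icc (0 : ℝ) 1) (hq : p' * (1 - p') ≤ p'' * (1 - p'')) :
    ∀ j x, reflSurvival p' b m j x ≤ reflSurvival p'' b m j x
  | 0, _ => le_rfl
  | j + 1, x => by
    set W' := (Set.Iio (b (m - j))).indicator (reflSurvival p' b m j)
    set W'' := (Set.Iio (b (m - j))).indicator (reflSurvival p'' b m j)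
    have hW : ∀ y, W' y ≤ W'' y := fun y =>
      Set.indicator_le_indicator (reflSurvival_le_reflSurvival hp' hp'' hq j y)
    have hW'' : W'' (x + 1) ≤ W'' ((x : ℤ) - 1).natAbs := le_natAbs_pred_of_add_two_le
      (indicator_add_two_le (reflSurvival_nonneg b m hp'' j) (reflSurvival_add_two_le b m hp'' j)) x
    have hφ₁ := upProb_le_one hp' x
    calc reflSurvival p' b m (j + 1) x
        = upProb p' x * W' (x + 1) + (1 - upProb p' x) * W' ((x : ℤ) - 1).natAbs := rfl
      _ ≤ upProb p' x * W'' (x + 1) + (1 - upProb p' x) * W'' ((x : ℤ) - 1).natAbs := by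
          gcongr
          exacts [upProb_nonneg hp' x, hW _, hW _]
      _ ≤ upProb p'' x * W'' (x + 1) + (1 - upProb p'' x) * W'' ((x : ℤ) - 1).natAbs :=
          mul_add_one_sub_mul_le_mul_add_one_sub_mul (upProb_le_upProb hp' hp'' hq x) hW''

end reflSurvival

noncomputable def killedLaw (p : ℝ) (b : ℕ → ℕ) : ℕ → ℤ → ℝ
  | 0, x => if x = 0 then 1 else 0
  | n + 1, x => if x.natAbs < b (n + 1) then
      p * killedLaw p b n (x - 1) + (1 - p) * killedLaw p b n (x + 1) else 0

section killedLaw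

variable {p : ℝ} (b : ℕ → ℕ)

lemma killedLaw_nonneg (hp : p ∈ Set.Icc (0 : ℝ) 1) : ∀ n x, 0 ≤ killedLaw p b n x
  | 0, x => by rw [killedLaw]; split_ifs <;> norm_num
  | n + 1, x => by
    rw [killedLaw]; split_ifs
    · exact add_nonneg (mul_nonneg hp.1 (killedLaw_nonneg hp n _))
        (mul_nonneg (sub_nonneg.2 hp.2) (killedLaw_nonneg hp n _))
    · exact le_rfl

lemma killedLaw_eq_zero_of_lt_natAbs :
    ∀ {n : ℕ} {x : ℤ}, n < x.natAbs → killedLaw p b n x = 0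
  | 0, x, hx => if_neg (by omega)
  | n + 1, x, hx => by
    rw [killedLaw, killedLaw_eq_zero_of_lt_natAbs (by omega),
      killedLaw_eq_zero_of_lt_natAbs (by omega)]
    simp

lemma one_sub_pow_mul_killedLaw : ∀ n (k : ℕ),
    (1 - p) ^ k * killedLaw p b n k = p ^ k * killedLaw p b n (-k)
  | 0, 0 => by simp
  | 0, k + 1 => by rw [killedLaw, killedLaw, if_neg (by omega), if_neg (by omega)]; ring
  | n + 1, 0 => by simp
  | n + 1, k + 1 => by
    have h₁ := one_sub_pow_mul_killedLaw n k
    have h₂ := one_sub_pow_mul_killedLaw n (k + 2)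
    simp only [killedLaw, Int.natAbs_neg]
    split_ifs
    · push_cast at h₁ h₂ ⊢
      rw [show (k : ℤ) + 1 - 1 = k by ring, show -((k : ℤ) + 1) + 1 = -k by ring,
        show -((k : ℤ) + 1) - 1 = -(k + 2) by ring, show (k : ℤ) + 1 + 1 = k + 2 by ring]
      linear_combination p * (1 - p) * h₁ + h₂
    · simp

end killedLaw

lemma mul_add_one_sub_mul_eq_upProb_mul {p : ℝ} (hp : p ∈ Set.Icc (0 : ℝ) 1) {a c : ℝ}
    {k : ℕ} (h : (1 - p) ^ k * a = p ^ k * c) : p * a + (1 - p) * c = upProb p k * (a + c) := by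
  rw [upProb, div_mul_eq_mul_div, eq_div_iff (powSum_pos hp k).ne', powSum, powSum]
  linear_combination (2 * p - 1) * h

/-- Pairing `x` with `-x`: by the mirror symmetry `hh`, the mass at `±k` steps away from `0`
with probability `upProb p k`. -/
lemma sum_mul_step_eq_sum_mul_reflStep {p : ℝ} (hp : p ∈ Set.Icc (0 : ℝ) 1) {h : ℤ → ℝ}
    (hh : ∀ k : ℕ, (1 - p) ^ k * h k = p ^ k * h (-k)) (W : ℕ → ℝ) (M : ℕ) :
    ∑ x ∈ Icc (-(M : ℤ)) M, h x * (p * W (x + 1).natAbs + (1 - p) * W (x - 1).natAbs)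
      = ∑ x ∈ Icc (-(M : ℤ)) M, h x * (upProb p x.natAbs * W (x.natAbs + 1)
          + (1 - upProb p x.natAbs) * W ((x.natAbs : ℤ) - 1).natAbs) := by
  set G : ℤ → ℝ := fun x => h x * (p * W (x + 1).natAbs + (1 - p) * W (x - 1).natAbs)
    - h x * (upProb p x.natAbs * W (x.natAbs + 1)
          + (1 - upProb p x.natAbs) * W ((x.natAbs : ℤ) - 1).natAbs)
  have hpair : ∀ k : ℕ, G k + G (-k) = 0 := by
    intro k
    have hφ := mul_add_one_sub_mul_eq_upProb_mul hp (hh k)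
    simp only [G, Int.natAbs_neg, Int.natAbs_natCast]
    rw [show ((k : ℤ) + 1).natAbs = k + 1 by omega, show (-(k : ℤ) - 1).natAbs = k + 1 by omega,
      show (-(k : ℤ) + 1).natAbs = ((k : ℤ) - 1).natAbs by omega]
    linear_combination (W (k + 1) - W ((k : ℤ) - 1).natAbs) * hφ
  have hG : ∀ x, G x + G (-x) = 0 := fun x => by
    rcases Int.natAbs_eq x with hx | hx <;> rw [hx]
    · exact hpair _
    · rw [neg_neg, add_comm]; exact hpair _
  rw [← sub_eq_zero, ← sum_sub_distrib]
  refine sum_involution (fun x _ => -x) (fun x _ => hG x) (fun x _ hx hneg => hx ?_)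
    (fun x hx => by simp only [mem_Icc] at hx ⊢; omega) (fun x _ => neg_neg x)
  obtain rfl : x = 0 := by omega
  have := hG 0
  rw [neg_zero] at this
  show G 0 = 0
  linarith

section bridge

variable {p : ℝ} (b : ℕ → ℕ) (m : ℕ)

lemma sum_killedLaw_succ_mul_reflSurvival (hp : p ∈ Set.Icc (0 : ℝ) 1) {n j : ℕ}
    (hm : n + 1 + j = m) :
    ∑ x ∈ Icc (-(m : ℤ)) m, killedLaw p b (n + 1) x * reflSurvival p b m j x.natAbs
      = ∑ x ∈ Icc (-(m : ℤ)) m, killedLaw p b n x * reflSurvival p b m (j + 1) x.natAbs := by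
  set W := (Set.Iio (b (n + 1))).indicator (reflSurvival p b m j)
  have hstep : ∀ x : ℤ, killedLaw p b (n + 1) x * reflSurvival p b m j x.natAbs
      = p * (killedLaw p b n (x - 1) * W x.natAbs)
        + (1 - p) * (killedLaw p b n (x + 1) * W x.natAbs) := by
    intro x
    simp only [W, Set.indicator, Set.mem_Iio, killedLaw]
    split_ifs <;> ring
  have hsupp : ∀ (x : ℤ) (c : ℝ), killedLaw p b n x * c ≠ 0 → x.natAbs + 1 ≤ m :=
    fun x c hx => by
      by_contra
      exact hx (by rw [killedLaw_eq_zero_of_lt_natAbs b (by omega), zero_mul])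
  have hdown := sum_Icc_comp_add (M := m) (d := -1)
    (F := fun x => killedLaw p b n x * W (x + 1).natAbs) fun x hx => by simpa using hsupp x _ hx
  have hup := sum_Icc_comp_add (M := m) (d := 1)
    (F := fun x => killedLaw p b n x * W (x - 1).natAbs) fun x hx => by simpa using hsupp x _ hx
  simp only [← sub_eq_add_neg, sub_add_cancel, add_sub_cancel_right] at hdown hup
  calc ∑ x ∈ Icc (-(m : ℤ)) m, killedLaw p b (n + 1) x * reflSurvival p b m j x.natAbs
      = p * ∑ x ∈ Icc (-(m : ℤ)) m, killedLaw p b n (x - 1) * W x.natAbs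
        + (1 - p) * ∑ x ∈ Icc (-(m : ℤ)) m, killedLaw p b n (x + 1) * W x.natAbs := by
        rw [sum_congr rfl fun x _ => hstep x, sum_add_distrib, mul_sum, mul_sum]
    _ = ∑ x ∈ Icc (-(m : ℤ)) m, killedLaw p b n x
          * (p * W (x + 1).natAbs + (1 - p) * W (x - 1).natAbs) := by
        rw [hdown, hup, mul_sum, mul_sum, ← sum_add_distrib]
        exact sum_congr rfl fun x _ => by ring
    _ = ∑ x ∈ Icc (-(m : ℤ)) m, killedLaw p b n x * reflSurvival p b m (j + 1) x.natAbs := by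
        rw [sum_mul_step_eq_sum_mul_reflStep hp (one_sub_pow_mul_killedLaw b n)]
        refine sum_congr rfl fun x _ => ?_
        rw [reflSurvival, show m - j = n + 1 by omega]

lemma sum_killedLaw_mul_reflSurvival (hp : p ∈ Set.Icc (0 : ℝ) 1) :
    ∀ n j, n + j = m →
      ∑ x ∈ Icc (-(m : ℤ)) m, killedLaw p b n x * reflSurvival p b m j x.natAbs
        = reflSurvival p b m m 0
  | 0, j, hj => by
    rw [sum_eq_single_of_mem 0 (by simp) fun x _ hx => by rw [killedLaw, if_neg hx, zero_mul]]
    simp [killedLaw, show j = m by omega]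
  | n + 1, j, hj => by
    rw [sum_killedLaw_succ_mul_reflSurvival b m hp (show n + 1 + j = m by omega)]
    exact sum_killedLaw_mul_reflSurvival hp n (j + 1) (by omega)

lemma sum_killedLaw_eq_reflSurvival (hp : p ∈ Set.Icc (0 : ℝ) 1) :
    ∑ x ∈ Icc (-(m : ℤ)) m, killedLaw p b m x = reflSurvival p b m m 0 := by
  simpa [reflSurvival] using sum_killedLaw_mul_reflSurvival b m hp m 0 (add_zero m)

end bridge

lemma stepDist_singleton_one (p : ℝ) : stepDist p {1} = ENNReal.ofReal p := by
  norm_num [stepDist]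

lemma stepDist_singleton_neg_one (p : ℝ) : stepDist p {-1} = ENNReal.ofReal (1 - p) := by
  norm_num [stepDist]

lemma ae_stepDist (p : ℝ) : ∀ᵐ y ∂stepDist p, y = 1 ∨ y = -1 :=
  ae_add_measure_iff.2 ⟨Measure.ae_smul_measure (by simp [ae_dirac_eq]) _,
    Measure.ae_smul_measure (by simp [ae_dirac_eq]) _⟩

section survivalSet

variable {Ω : Type*}

def survivalSet (X : ℕ → Ω → ℝ) (b : ℕ → ℕ) (n : ℕ) : Set Ω :=
  {ω | ∀ k, 1 ≤ k → k ≤ n → |∑ i ∈ range k, X i ω| < (b k : ℝ)}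

def survivalSetAt (X : ℕ → Ω → ℝ) (b : ℕ → ℕ) (n : ℕ) (x : ℤ) : Set Ω :=
  survivalSet X b n ∩ {ω | ∑ i ∈ range n, X i ω = x}

variable {X : ℕ → Ω → ℝ} (b : ℕ → ℕ)

lemma survivalSet_succ (n : ℕ) : survivalSet X b (n + 1)
    = survivalSet X b n ∩ {ω | |∑ i ∈ range (n + 1), X i ω| < (b (n + 1) : ℝ)} := by
  ext ω
  simp only [survivalSet, Set.mem_inter_iff, Set.mem_ofPred_eq]
  refine ⟨fun h => ⟨fun k hk hkn => h k hk (by omega), h _ (by omega) le_rfl⟩,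
    fun ⟨h, hn⟩ k hk hkn => ?_⟩
  rcases Nat.lt_or_eq_of_le hkn with hkn | rfl
  exacts [h k hk (by omega), hn]

lemma survivalSetAt_succ_inter {n : ℕ} {x : ℤ} (hx : x.natAbs < b (n + 1)) (s : ℤ) :
    survivalSetAt X b (n + 1) x ∩ X n ⁻¹' {(s : ℝ)}
      = survivalSetAt X b n (x - s) ∩ X n ⁻¹' {(s : ℝ)} := by
  have hxb : |(x : ℝ)| < b (n + 1) := abs_intCast_lt_natCast_iff.2 hx
  ext ω
  simp only [survivalSetAt, survivalSet_succ, Set.mem_inter_iff, Set.mem_ofPred_eq,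
    Set.mem_preimage, Set.mem_singleton_iff, sum_range_succ]
  constructor
  · rintro ⟨⟨⟨h, -⟩, hS⟩, hs⟩
    exact ⟨⟨h, by push_cast; linarith⟩, hs⟩
  · rintro ⟨⟨h, hS⟩, hs⟩
    have hS' : ∑ i ∈ range n, X i ω + X n ω = x := by rw [hS, hs]; push_cast; ring
    exact ⟨⟨⟨h, by rwa [hS']⟩, hS'⟩, hs⟩

lemma survivalSetAt_succ_eq_empty {n : ℕ} {x : ℤ} (hx : b (n + 1) ≤ x.natAbs) :
    survivalSetAt X b (n + 1) x = ∅ := by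
  refine Set.eq_empty_of_forall_notMem fun ω ⟨hω, hS⟩ => ?_
  rw [survivalSet_succ] at hω
  obtain ⟨-, hlt⟩ := hω
  change |∑ i ∈ range (n + 1), X i ω| < (b (n + 1) : ℝ) at hlt
  rw [show ∑ i ∈ range (n + 1), X i ω = x from hS, abs_intCast_lt_natCast_iff] at hlt
  omega

lemma measurableSet_survivalSetAt (n : ℕ) (x : ℤ) :
    MeasurableSet[⨆ i ∈ Set.Iio n, MeasurableSpace.comap (X i) inferInstance]
      (survivalSetAt X b n x) := by
  have hS : ∀ k ≤ n, Measurable[⨆ i ∈ Set.Iio n, MeasurableSpace.comap (X i) inferInstance]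
      fun ω => ∑ i ∈ range k, X i ω := fun k hk =>
    Finset.measurable_sum _ fun i hi => Measurable.of_comap_le
      (le_biSup (fun i => MeasurableSpace.comap (X i) inferInstance)
        (Set.mem_Iio.2 (by simp only [mem_range] at hi; omega)))
  refine MeasurableSet.inter ?_ ((hS n le_rfl) (measurableSet_singleton _))
  simp only [survivalSet, Set.ofPred_forall]
  exact MeasurableSet.iInter fun k => MeasurableSet.iInter fun _ => MeasurableSet.iInter fun hk =>
    hS k hk (measurableSet_lt measurable_abs measurable_const)

variable [MeasurableSpace Ω] {μ : Measure Ω} {p : ℝ}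

lemma measure_survivalSetAt_inter_preimage (hX : ∀ i, Measurable (X i)) (hind : iIndepFun X μ)
    (n : ℕ) (x : ℤ) {B : Set ℝ} (hB : MeasurableSet B) :
    μ (survivalSetAt X b n x ∩ X n ⁻¹' B)
      = μ (survivalSetAt X b n x) * μ (X n ⁻¹' B) := by
  have hindep := indep_iSup_of_disjoint (fun i => (hX i).comap_le) hind.iIndep
    (S := Set.Iio n) (T := {n}) (by simp)
  refine (Indep_iff _ _ μ).1 hindep _ _ (measurableSet_survivalSetAt b n x) ?_
  exact Measurable.of_comap_le
    (le_biSup (fun i => MeasurableSpace.comap (X i) inferInstance) (Set.mem_singleton n)) hB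

lemma measure_survivalSetAt_succ (hX : ∀ i, Measurable (X i)) (hind : iIndepFun X μ)
    (hdist : ∀ i, μ.map (X i) = stepDist p) {n : ℕ} {x : ℤ} (hx : x.natAbs < b (n + 1)) :
    μ (survivalSetAt X b (n + 1) x) = μ (survivalSetAt X b n (x - 1)) * ENNReal.ofReal p
      + μ (survivalSetAt X b n (x + 1)) * ENNReal.ofReal (1 - p) := by
  have hae := ae_of_ae_map (hX n).aemeasurable (hdist n ▸ ae_stepDist p)
  have hup : μ (X n ⁻¹' {1}) = ENNReal.ofReal p := by
    rw [← Measure.map_apply (hX n) (measurableSet_singleton _), hdist, stepDist_singleton_one]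
  have hdown : μ (X n ⁻¹' {-1}) = ENNReal.ofReal (1 - p) := by
    rw [← Measure.map_apply (hX n) (measurableSet_singleton _), hdist, stepDist_singleton_neg_one]
  have e₁ := survivalSetAt_succ_inter (X := X) b hx 1
  have e₂ := survivalSetAt_succ_inter (X := X) b hx (-1)
  push_cast [sub_neg_eq_add] at e₁ e₂
  rw [measure_eq_inter_add_inter (hX n) hae, e₁, e₂,
    measure_survivalSetAt_inter_preimage b hX hind _ _ (measurableSet_singleton _),
    measure_survivalSetAt_inter_preimage b hX hind _ _ (measurableSet_singleton _), hup, hdown]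

lemma measure_survivalSetAt [IsProbabilityMeasure μ] (hp : p ∈ Set.Icc (0 : ℝ) 1)
    (hX : ∀ i, Measurable (X i)) (hind : iIndepFun X μ)
    (hdist : ∀ i, μ.map (X i) = stepDist p) :
    ∀ n x, μ (survivalSetAt X b n x) = ENNReal.ofReal (killedLaw p b n x)
  | 0, x => by
    by_cases hx : x = 0
    · have huniv : survivalSetAt X b 0 x = Set.univ :=
        Set.eq_univ_of_forall fun ω => ⟨fun k hk hk0 => absurd hk0 (by omega), by simp [hx]⟩
      rw [huniv, measure_univ, killedLaw, if_pos hx, ENNReal.ofReal_one]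
    · simp [survivalSetAt, survivalSet, killedLaw, hx, eq_comm]
  | n + 1, x => by
    by_cases hx : x.natAbs < b (n + 1)
    · have h₁ := killedLaw_nonneg b hp n (x - 1)
      have h₂ := killedLaw_nonneg b hp n (x + 1)
      rw [measure_survivalSetAt_succ b hX hind hdist hx, measure_survivalSetAt hp hX hind hdist n,
        measure_survivalSetAt hp hX hind hdist n, ← ENNReal.ofReal_mul h₁,
        ← ENNReal.ofReal_mul h₂,
        ← ENNReal.ofReal_add (mul_nonneg h₁ hp.1) (mul_nonneg h₂ (sub_nonneg.2 hp.2)),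
        killedLaw, if_pos hx]
      ring_nf
    · rw [survivalSetAt_succ_eq_empty b (not_lt.1 hx), killedLaw, if_neg hx, measure_empty,
        ENNReal.ofReal_zero]

lemma measure_survivalSet [IsProbabilityMeasure μ] (hp : p ∈ Set.Icc (0 : ℝ) 1)
    (hX : ∀ i, Measurable (X i)) (hind : iIndepFun X μ)
    (hdist : ∀ i, μ.map (X i) = stepDist p) (m : ℕ) :
    μ (survivalSet X b m) = ENNReal.ofReal (reflSurvival p b m m 0) := by
  have hae : ∀ᵐ ω ∂μ, ∀ i, X i ω = 1 ∨ X i ω = -1 :=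
    ae_all_iff.2 fun i => ae_of_ae_map (hX i).aemeasurable (hdist i ▸ ae_stepDist p)
  have hcover : survivalSet X b m =ᵐ[μ] ⋃ x ∈ Icc (-(m : ℤ)) m, survivalSetAt X b m x := by
    refine Filter.eventuallyEq_set.2 (hae.mono fun ω hω => ?_)
    obtain ⟨x, hxm, hx⟩ := exists_sum_range_eq_intCast hω m
    simp only [Set.mem_iUnion, survivalSetAt, Set.mem_inter_iff, Set.mem_ofPred_eq, mem_Icc,
      exists_prop]
    exact ⟨fun h => ⟨x, by omega, h, hx⟩, fun ⟨_, _, h, _⟩ => h⟩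
  have hdisj : (Icc (-(m : ℤ)) m : Set ℤ).PairwiseDisjoint (survivalSetAt X b m) :=
    fun x _ y _ hxy => Set.disjoint_left.2 fun ω ⟨_, hx⟩ ⟨_, hy⟩ =>
      hxy (by exact_mod_cast (Set.mem_ofPred_eq ▸ hx).symm.trans hy)
  rw [measure_congr hcover, measure_biUnion_finset hdisj fun x _ =>
      iSup₂_le (fun i _ => (hX i).comap_le) _ (measurableSet_survivalSetAt b m x),
    sum_congr rfl fun x _ => measure_survivalSetAt b hp hX hind hdist m x,
    ← ENNReal.ofReal_sum_of_nonneg fun x _ => killedLaw_nonneg b hp m x,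
    sum_killedLaw_eq_reflSurvival b m hp]

end survivalSet

end BernoulliWalk

theorem bernoulli_walk_stopping_time_stochastically_monotone_general
    {Ω' Ω'' : Type*} [MeasurableSpace Ω'] [MeasurableSpace Ω'']
    (μ' : Measure Ω') (μ'' : Measure Ω'')
    [IsProbabilityMeasure μ'] [IsProbabilityMeasure μ'']
    (p' p'' : ℝ) (hp' : p' ∈ Set.Icc (0 : ℝ) 1) (hp'' : p'' ∈ Set.Icc (0 : ℝ) 1)
    (hpp : |p' - 1/2| > |p'' - 1/2|)
    (X' : ℕ → Ω' → ℝ) (X'' : ℕ → Ω'' → ℝ)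
    (hX'meas : ∀ i, Measurable (X' i)) (hX''meas : ∀ i, Measurable (X'' i))
    (hX'indep : iIndepFun X' μ')
    (hX''indep : iIndepFun X'' μ'')
    (hX'dist : ∀ i, Measure.map (X' i) μ' = stepDist p')
    (hX''dist : ∀ i, Measure.map (X'' i) μ'' = stepDist p'')
    (b : ℕ → ℕ) (m : ℕ) :
    μ' {ω | ∀ n, 1 ≤ n → n ≤ m → |∑ i ∈ Finset.range n, X' i ω| < (b n : ℝ)}
      ≤ μ'' {ω | ∀ n, 1 ≤ n → n ≤ m → |∑ i ∈ Finset.range n, X'' i ω| < (b n : ℝ)} := by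
  have hq : p' * (1 - p') ≤ p'' * (1 - p'') := by nlinarith [sq_lt_sq.2 hpp]
  calc μ' (BernoulliWalk.survivalSet X' b m)
      = ENNReal.ofReal (BernoulliWalk.reflSurvival p' b m m 0) :=
        BernoulliWalk.measure_survivalSet b hp' hX'meas hX'indep hX'dist m
    _ ≤ ENNReal.ofReal (BernoulliWalk.reflSurvival p'' b m m 0) :=
        ENNReal.ofReal_le_ofReal (BernoulliWalk.reflSurvival_le_reflSurvival b m hp' hp'' hq m 0)
    _ = μ'' (BernoulliWalk.survivalSet X'' b m) :=
        (BernoulliWalk.measure_survivalSet b hp'' hX''meas hX''indep hX''dist m).symm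

/-- **Corollary 1.** For non-negative integer boundaries `b_n`, the stopping time
`T^p = inf{n ≥ 1 : |S^p_n| ≥ b_n}` of the Bernoulli random walk is stochastically
increasing in `p ∈ [0,1/2]` and decreasing in `p ∈ [1/2,1]`: if `|p' - 1/2| > |p'' - 1/2|`,
then `P(T^{p'} > m) ≤ P(T^{p''} > m)` for every `m ≥ 1`, where
`{T^p > m} = {|S^p_n| < b_n for all 1 ≤ n ≤ m}`. -/
theorem bernoulli_walk_stopping_time_stochastically_monotone
    {Ω' Ω'' : Type*} [MeasurableSpace Ω'] [MeasurableSpace Ω'']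
    (μ' : Measure Ω') (μ'' : Measure Ω'')
    [IsProbabilityMeasure μ'] [IsProbabilityMeasure μ'']
    (p' p'' : ℝ) (hp' : p' ∈ Set.Icc (0 : ℝ) 1) (hp'' : p'' ∈ Set.Icc (0 : ℝ) 1)
    (hpp : |p' - 1/2| > |p'' - 1/2|)
    (X' : ℕ → Ω' → ℝ) (X'' : ℕ → Ω'' → ℝ)
    (hX'meas : ∀ i, Measurable (X' i)) (hX''meas : ∀ i, Measurable (X'' i))
    (hX'indep : iIndepFun X' μ')
    (hX''indep : iIndepFun X'' μ'')
    (hX'dist : ∀ i, Measure.map (X' i) μ' = stepDist p')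
    (hX''dist : ∀ i, Measure.map (X'' i) μ'' = stepDist p'')
    (b : ℕ → ℕ) (m : ℕ) (hm : 1 ≤ m) :
    μ' {ω | ∀ n, 1 ≤ n → n ≤ m → |∑ i ∈ Finset.range n, X' i ω| < (b n : ℝ)}
      ≤ μ'' {ω | ∀ n, 1 ≤ n → n ≤ m → |∑ i ∈ Finset.range n, X'' i ω| < (b n : ℝ)} :=
  bernoulli_walk_stopping_time_stochastically_monotone_general μ' μ'' p' p'' hp' hp'' hpp X' X''
    hX'meas hX''meas hX'indep hX''indep hX'dist hX''dist b m
end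

section
/- For non-negative integers b_n (n ≥ 1), the stopping time T̂^p = inf{n ≥ 1 : |U_n^p| ≥ b_n} is stochastically maximized over p ∈ [0,1] by p = 1/2; that is, for every p ∈ [0,1] and every m ≥ 1, P(T̂^{p} > m) ≤ P(T̂^{1/2} > m). -/
/-!
Write `v_n(x) = P(T̂^p > n, U^p_n = x)`. It satisfies
`v_{n+1}(x) = 1{|x| < b_{n+1}} (p v_n(x-1) + (1-p) v_n(x+1))`, and `P(T̂^p > m)` is the mass of
`v_m` on `[-(m+1), m+1]`, so it suffices to show that every symmetric window `[-j, j]` carries at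
most as much `v_n`-mass as for `p = 1/2`. The reflection `x ↦ -x` exchanges `p` and `1 - p`, so
let `p ≥ 1/2`. Then `v_n` is right-skewed: `v_n(-j) ≤ v_n(j)` and `v_n(-j-2) ≤ v_n(-j)` for
`j ≥ 0`, and the recursion preserves this. One step turns the mass of a window into `p L + (1-p) R`,
where `L` and `R` are the masses of the window shifted one to the left and one to the right.
Skewness gives `L ≤ R`, so this is at most `(L + R) / 2`, the value for `p = 1/2`; and `L + R` is
the total mass of two symmetric windows (for the window `{0}`, after a parity argument), to which
induction applies.
-/

open MeasureTheory ProbabilityTheory Finset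

noncomputable def killedStep (p : ℝ) (B : ℤ) (f : ℤ → ℝ) (x : ℤ) : ℝ :=
  if |x| < B then p * f (x - 1) + (1 - p) * f (x + 1) else 0

/-- `survivalMass p b n x = P(T̂^p > n, U^p_n = x)`,
see `measure_survivalSet_inter_partialSum_eq`. -/
noncomputable def survivalMass (p : ℝ) (b : ℕ → ℕ) : ℕ → ℤ → ℝ
  | 0 => fun x => if x = 1 ∨ x = -1 then 1 / 2 else 0
  | n + 1 => killedStep p (b (n + 1)) (survivalMass p b n)

def IsRightSkewed (f : ℤ → ℝ) : Prop :=
  ∀ j, 0 ≤ j → f (-j) ≤ f j ∧ f (-j - 2) ≤ f (-j)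

section KilledStep
variable {p : ℝ} {B : ℤ} {f : ℤ → ℝ}

lemma killedStep_nonneg (hp0 : 0 ≤ p) (hp1 : p ≤ 1) (hf : 0 ≤ f) : 0 ≤ killedStep p B f := by
  intro x
  unfold killedStep
  split_ifs
  · exact add_nonneg (mul_nonneg hp0 (hf _)) (mul_nonneg (by linarith) (hf _))
  · exact le_rfl

lemma killedStep_one_sub (x : ℤ) :
    killedStep (1 - p) B f x = killedStep p B (fun y => f (-y)) (-x) := by
  simp only [killedStep, abs_neg, sub_sub_cancel]
  split_ifs
  · rw [show -(-x - 1) = x + 1 by ring, show -(-x + 1) = x - 1 by ring]; ring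
  · rfl

lemma killedStep_eq_zero_of_even {c : ℤ} (hf : ∀ x, Even (x + c) → f x = 0) (x : ℤ)
    (hx : Even (x + (c + 1))) : killedStep p B f x = 0 := by
  rw [Int.even_iff] at hx
  have h₁ : f (x - 1) = 0 := hf _ (by rw [Int.even_iff]; omega)
  have h₂ : f (x + 1) = 0 := hf _ (by rw [Int.even_iff]; omega)
  simp [killedStep, h₁, h₂]

lemma IsRightSkewed.neg_sub_one_le (hf : IsRightSkewed f) {j : ℤ} (hj : 0 ≤ j) :
    f (-j - 1) ≤ f (-j + 1) := by
  rcases hj.eq_or_lt with rfl | hj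
  · simpa using (hf 1 zero_le_one).1
  · convert (hf (j - 1) (by omega)).2 using 2 <;> ring

lemma IsRightSkewed.killedStep_neg_le (hf : IsRightSkewed f) (hp : 1 / 2 ≤ p) (hp1 : p ≤ 1)
    {j : ℤ} (hj : 0 ≤ j) : killedStep p B f (-j) ≤ killedStep p B f j := by
  rcases hj.eq_or_lt with rfl | hj
  · simp
  simp only [killedStep, abs_neg]
  split_ifs
  · have hac : f (-j - 1) ≤ f (-j + 1) := hf.neg_sub_one_le hj.le
    have hcd : f (-j + 1) ≤ f (j - 1) := by convert (hf (j - 1) (by omega)).1 using 2; ring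
    have hae : f (-j - 1) ≤ f (j + 1) := by convert (hf (j + 1) (by omega)).1 using 2; ring
    -- RHS - LHS = p (f (j-1) - f (-j+1)) + (1-p) (f (j+1) - f (-j-1))
    --   + (2p-1) (f (-j+1) - f (-j-1))
    nlinarith [mul_nonneg (by linarith : (0 : ℝ) ≤ p) (sub_nonneg.2 hcd),
      mul_nonneg (sub_nonneg.2 hp1) (sub_nonneg.2 hae),
      mul_nonneg (by linarith : (0 : ℝ) ≤ 2 * p - 1) (sub_nonneg.2 hac)]
  · exact le_rfl

lemma IsRightSkewed.killedStep_neg_sub_two_le (hf : IsRightSkewed f) (hf0 : 0 ≤ f)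
    (hp : 1 / 2 ≤ p) (hp1 : p ≤ 1) {j : ℤ} (hj : 0 ≤ j) :
    killedStep p B f (-j - 2) ≤ killedStep p B f (-j) := by
  by_cases hB : |-j - 2| < B
  · have hB' : |-j| < B := by rw [abs_lt] at hB ⊢; omega
    simp only [killedStep, if_pos hB, if_pos hB']
    have h₁ : f (-j - 2 - 1) ≤ f (-j - 1) := by convert (hf (j + 1) (by omega)).2 using 2 <;> ring
    have h₂ : f (-j - 2 + 1) ≤ f (-j + 1) := by convert hf.neg_sub_one_le hj using 2; ring
    gcongr
  · simp only [killedStep, if_neg hB]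
    exact killedStep_nonneg (by linarith) hp1 hf0 _

lemma IsRightSkewed.killedStep (hf : IsRightSkewed f) (hf0 : 0 ≤ f) (hp : 1 / 2 ≤ p)
    (hp1 : p ≤ 1) : IsRightSkewed (killedStep p B f) := fun _ hj =>
  ⟨hf.killedStep_neg_le hp hp1 hj, hf.killedStep_neg_sub_two_le hf0 hp hp1 hj⟩

section SurvivalMass
variable {p : ℝ} (b : ℕ → ℕ)

lemma survivalMass_nonneg (hp0 : 0 ≤ p) (hp1 : p ≤ 1) : ∀ n, 0 ≤ survivalMass p b n
  | 0 => fun x => by simp only [survivalMass]; split_ifs <;> norm_num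
  | n + 1 => killedStep_nonneg hp0 hp1 (survivalMass_nonneg hp0 hp1 n)

lemma survivalMass_eq_zero_of_even : ∀ (n : ℕ) (x : ℤ), Even (x + n) → survivalMass p b n x = 0
  | 0, x, hx => by
    rw [Int.even_iff] at hx
    simp only [survivalMass]
    rw [if_neg (by omega)]
  | n + 1, x, hx => killedStep_eq_zero_of_even (survivalMass_eq_zero_of_even n) x
      (by exact_mod_cast hx)

lemma survivalMass_one_sub : ∀ (n : ℕ) (x : ℤ), survivalMass (1 - p) b n x = survivalMass p b n (-x)
  | 0, x => by
    simp only [survivalMass]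
    congr 1
    simp only [eq_iff_iff]
    omega
  | n + 1, x => by
    simp only [survivalMass, killedStep_one_sub]
    congr
    ext y
    rw [survivalMass_one_sub n, neg_neg]

lemma isRightSkewed_survivalMass (hp : 1 / 2 ≤ p) (hp1 : p ≤ 1) :
    ∀ n, IsRightSkewed (survivalMass p b n)
  | 0 => fun j hj => by
    simp only [survivalMass]
    constructor <;> split_ifs <;> first | omega | norm_num
  | n + 1 => (isRightSkewed_survivalMass hp hp1 n).killedStep
      (survivalMass_nonneg b (by linarith) hp1 n) hp hp1

end SurvivalMass

section IntervalSums
variable (f : ℤ → ℝ)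

lemma sum_Icc_eq_add_sum_Icc_add_one {a b : ℤ} (h : a ≤ b) :
    ∑ x ∈ Icc a b, f x = f a + ∑ x ∈ Icc (a + 1) b, f x := by
  rw [← insert_Icc_add_one_left_eq_Icc h, sum_insert (by simp)]

lemma sum_Icc_eq_sum_Icc_sub_one_add {a b : ℤ} (h : a ≤ b) :
    ∑ x ∈ Icc a b, f x = ∑ x ∈ Icc a (b - 1), f x + f b := by
  rw [← insert_Icc_sub_one_right_eq_Icc h, sum_insert (by simp), add_comm]

lemma sum_Icc_comp_add (a b c : ℤ) :
    ∑ x ∈ Icc a b, f (x + c) = ∑ x ∈ Icc (a + c) (b + c), f x := by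
  rw [← map_add_right_Icc, sum_map]
  rfl

lemma sum_Icc_comp_neg (j : ℤ) : ∑ x ∈ Icc (-j) j, f (-x) = ∑ x ∈ Icc (-j) j, f x :=
  sum_nbij' Neg.neg Neg.neg (by intro x; simp; omega) (by intro x; simp; omega) (by simp)
    (by simp) (by simp)

lemma sum_Icc_killedStep (p : ℝ) (B j : ℤ) :
    ∑ x ∈ Icc (-j) j, killedStep p B f x =
      p * ∑ x ∈ Icc (-min j (B - 1) - 1) (min j (B - 1) - 1), f x +
        (1 - p) * ∑ x ∈ Icc (-min j (B - 1) + 1) (min j (B - 1) + 1), f x := by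
  set k := min j (B - 1)
  have hk : (Icc (-j) j).filter (fun x => |x| < B) = Icc (-k) k := by
    ext x; simp only [mem_filter, mem_Icc, abs_lt]; omega
  simp only [killedStep, ← sum_filter, hk, sum_add_distrib, ← mul_sum, sub_eq_add_neg,
    sum_Icc_comp_add]

lemma sum_Icc_sub_one_le_sum_Icc_add_one (hf : IsRightSkewed f) {k : ℤ} (hk : 0 ≤ k) :
    ∑ x ∈ Icc (-k - 1) (k - 1), f x ≤ ∑ x ∈ Icc (-k + 1) (k + 1), f x := by
  have hleft : ∑ x ∈ Icc (-k - 1) (k + 1), f x =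
      ∑ x ∈ Icc (-k - 1) (k - 1), f x + f k + f (k + 1) := by
    rw [sum_Icc_eq_sum_Icc_sub_one_add f (by omega), add_sub_cancel_right,
      sum_Icc_eq_sum_Icc_sub_one_add f (by omega)]
  have hright : ∑ x ∈ Icc (-k - 1) (k + 1), f x =
      f (-k - 1) + f (-k) + ∑ x ∈ Icc (-k + 1) (k + 1), f x := by
    rw [sum_Icc_eq_add_sum_Icc_add_one f (by omega), sub_add_cancel,
      sum_Icc_eq_add_sum_Icc_add_one f (by omega), add_assoc]
  have h₁ : f (-k) ≤ f k := (hf k hk).1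
  have h₂ : f (-k - 1) ≤ f (k + 1) := by convert (hf (k + 1) (by omega)).1 using 2; ring
  linarith

lemma sum_Icc_sub_one_add_sum_Icc_add_one {k : ℤ} (hk : 1 ≤ k) :
    ∑ x ∈ Icc (-k - 1) (k - 1), f x + ∑ x ∈ Icc (-k + 1) (k + 1), f x =
      ∑ x ∈ Icc (-(k + 1)) (k + 1), f x + ∑ x ∈ Icc (-(k - 1)) (k - 1), f x := by
  rw [← sum_union_inter]
  congr 2 <;> ext x <;> simp only [mem_union, mem_inter, mem_Icc] <;> omega

end IntervalSums

section Comparison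
variable {v w : ℤ → ℝ} (c : ℤ)

lemma sum_Icc_sub_one_add_sum_Icc_add_one_le (hv : ∀ x, Even (x + c) → v x = 0)
    (hw : ∀ x, Even (x + c) → w x = 0)
    (hvw : ∀ j, ∑ x ∈ Icc (-j) j, v x ≤ ∑ x ∈ Icc (-j) j, w x) {k : ℤ} (hk : 0 ≤ k) :
    ∑ x ∈ Icc (-k - 1) (k - 1), v x + ∑ x ∈ Icc (-k + 1) (k + 1), v x ≤
      ∑ x ∈ Icc (-k - 1) (k - 1), w x + ∑ x ∈ Icc (-k + 1) (k + 1), w x := by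
  rcases hk.eq_or_lt with rfl | hk
  · -- the windows are `{-1}` and `{1}`; the parity class of `c` kills either `0` or both `±1`
    have h : v (-1) + v 0 + v 1 ≤ w (-1) + w 0 + w 1 := by
      simpa [show Icc (-1 : ℤ) 1 = {-1, 0, 1} from rfl, add_assoc] using hvw 1
    simp only [neg_zero, zero_sub, zero_add, Icc_self, sum_singleton]
    rcases Int.even_or_odd c with hc | hc
    · have hc0 : Even (0 + c) := by rwa [zero_add]
      linarith [hv 0 hc0, hw 0 hc0]
    · rw [Int.odd_iff] at hc
      have hc₁ : Even (1 + c) := by rw [Int.even_iff]; omega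
      have hc₂ : Even (-1 + c) := by rw [Int.even_iff]; omega
      linarith [hv 1 hc₁, hw 1 hc₁, hv (-1) hc₂, hw (-1) hc₂]
  · rw [sum_Icc_sub_one_add_sum_Icc_add_one v hk, sum_Icc_sub_one_add_sum_Icc_add_one w hk]
    exact add_le_add (hvw _) (hvw _)

lemma sum_Icc_killedStep_le_half {p : ℝ} (hp : 1 / 2 ≤ p) (B : ℤ)
    (hv : IsRightSkewed v) (hv0 : ∀ x, Even (x + c) → v x = 0) (hw0 : ∀ x, Even (x + c) → w x = 0)
    (hvw : ∀ j, ∑ x ∈ Icc (-j) j, v x ≤ ∑ x ∈ Icc (-j) j, w x) (j : ℤ) :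
    ∑ x ∈ Icc (-j) j, killedStep p B v x ≤ ∑ x ∈ Icc (-j) j, killedStep (1 / 2) B w x := by
  rw [sum_Icc_killedStep, sum_Icc_killedStep]
  set k := min j (B - 1)
  rcases lt_or_ge k 0 with hk | hk
  · simp [Icc_eq_empty_of_lt (show k - 1 < -k - 1 by omega),
      Icc_eq_empty_of_lt (show k + 1 < -k + 1 by omega)]
  set Lv := ∑ x ∈ Icc (-k - 1) (k - 1), v x
  set Rv := ∑ x ∈ Icc (-k + 1) (k + 1), v x
  set Lw := ∑ x ∈ Icc (-k - 1) (k - 1), w x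
  set Rw := ∑ x ∈ Icc (-k + 1) (k + 1), w x
  calc p * Lv + (1 - p) * Rv ≤ (Lv + Rv) / 2 := by
        nlinarith [sum_Icc_sub_one_le_sum_Icc_add_one v hv hk]
    _ ≤ (Lw + Rw) / 2 := by linarith [sum_Icc_sub_one_add_sum_Icc_add_one_le c hv0 hw0 hvw hk]
    _ = 1 / 2 * Lw + (1 - 1 / 2) * Rw := by ring

variable {p : ℝ} (b : ℕ → ℕ)

theorem sum_Icc_survivalMass_le_half_of_half_le (hp : 1 / 2 ≤ p) (hp1 : p ≤ 1) :
    ∀ (n : ℕ) (j : ℤ), ∑ x ∈ Icc (-j) j, survivalMass p b n x ≤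
      ∑ x ∈ Icc (-j) j, survivalMass (1 / 2) b n x
  | 0, _ => le_rfl
  | n + 1, j => sum_Icc_killedStep_le_half n hp _ (isRightSkewed_survivalMass b hp hp1 n)
      (survivalMass_eq_zero_of_even b n) (survivalMass_eq_zero_of_even b n)
      (sum_Icc_survivalMass_le_half_of_half_le hp hp1 n) j

theorem sum_Icc_survivalMass_le_half (hp0 : 0 ≤ p) (hp1 : p ≤ 1) (n : ℕ) (j : ℤ) :
    ∑ x ∈ Icc (-j) j, survivalMass p b n x ≤ ∑ x ∈ Icc (-j) j, survivalMass (1 / 2) b n x := by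
  rcases le_or_gt (1 / 2) p with hp | hp
  · exact sum_Icc_survivalMass_le_half_of_half_le b hp hp1 n j
  · calc ∑ x ∈ Icc (-j) j, survivalMass p b n x
        = ∑ x ∈ Icc (-j) j, survivalMass (1 - p) b n (-x) := by
          simp only [survivalMass_one_sub, neg_neg]
      _ = ∑ x ∈ Icc (-j) j, survivalMass (1 - p) b n x := sum_Icc_comp_neg _ j
      _ ≤ _ := sum_Icc_survivalMass_le_half_of_half_le b (by linarith) (by linarith) n j

end Comparison

lemma stepDist_singleton_one (r : ℝ) : stepDist r {1} = ENNReal.ofReal r := by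
  norm_num [stepDist, Measure.dirac_apply', Pi.single_apply]

lemma stepDist_singleton_neg_one (r : ℝ) : stepDist r {-1} = ENNReal.ofReal (1 - r) := by
  norm_num [stepDist, Measure.dirac_apply', Pi.single_apply]

lemma ae_stepDist (r : ℝ) : ∀ᵐ y ∂stepDist r, y = 1 ∨ y = -1 := by
  simp only [stepDist, ae_add_measure_iff]
  constructor <;> refine Measure.ae_smul_measure ?_ _ <;> simp [ae_dirac_eq]

lemma stepDist_singleton_eq_zero (r : ℝ) {c : ℝ} (h₁ : c ≠ 1) (h₂ : c ≠ -1) : stepDist r {c} = 0 :=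
  measure_mono_null (by simpa using ⟨h₁, h₂⟩) (ae_iff.1 (ae_stepDist r))

lemma ae_eq_one_or_eq_neg_one_of_map_eq_stepDist {Ω : Type*} [MeasurableSpace Ω] {μ : Measure Ω}
    {X : Ω → ℝ} (hX : Measurable X) {r : ℝ} (h : μ.map X = stepDist r) :
    ∀ᵐ ω ∂μ, X ω = 1 ∨ X ω = -1 :=
  ae_of_ae_map hX.aemeasurable (h ▸ ae_stepDist r)

section Walk
variable {Ω : Type*} {Y : ℕ → Ω → ℝ}

def partialSum (Y : ℕ → Ω → ℝ) (n : ℕ) (ω : Ω) : ℝ := ∑ i ∈ range (n + 1), Y i ω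

/-- The event `{T̂ > m}` for the walk `U_n = partialSum Y n`. -/
def survivalSet (b : ℕ → ℕ) (Y : ℕ → Ω → ℝ) (m : ℕ) : Set Ω :=
  {ω | ∀ n, 1 ≤ n → n ≤ m → |partialSum Y n ω| < (b n : ℝ)}

lemma survivalSet_succ (b : ℕ → ℕ) (n : ℕ) :
    survivalSet b Y (n + 1) =
      survivalSet b Y n ∩ {ω | |partialSum Y (n + 1) ω| < (b (n + 1) : ℝ)} := by
  ext ω
  simp only [survivalSet, Set.mem_inter_iff, Set.mem_ofPred_eq]
  constructor
  · intro h
    exact ⟨fun k hk₁ hk₂ => h k hk₁ (by omega), h (n + 1) (by omega) le_rfl⟩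
  · rintro ⟨h, hn⟩ k hk₁ hk₂
    rcases hk₂.eq_or_lt with rfl | hk₂
    · exact hn
    · exact h k hk₁ (by omega)

lemma survivalSet_succ_inter_preimage (b : ℕ → ℕ) (n : ℕ) (x : ℝ) :
    survivalSet b Y (n + 1) ∩ partialSum Y (n + 1) ⁻¹' {x} =
      if |x| < b (n + 1) then survivalSet b Y n ∩ partialSum Y (n + 1) ⁻¹' {x} else ∅ := by
  ext ω
  rw [survivalSet_succ]
  split_ifs with hx
  · refine ⟨fun ⟨⟨h, _⟩, hω⟩ => ⟨h, hω⟩, fun ⟨h, hω⟩ => ⟨⟨h, ?_⟩, hω⟩⟩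
    rwa [Set.mem_ofPred_eq, show partialSum Y (n + 1) ω = x from hω]
  · refine ⟨fun ⟨⟨_, h⟩, hω⟩ => hx ?_, False.elim⟩
    rwa [Set.mem_ofPred_eq, show partialSum Y (n + 1) ω = x from hω] at h

lemma inter_preimage_partialSum_succ (s : Set Ω) (n : ℕ) (x : ℝ) :
    s ∩ partialSum Y (n + 1) ⁻¹' {x} ∩ Y (n + 1) ⁻¹' {1, -1} =
      (s ∩ partialSum Y n ⁻¹' {x - 1} ∩ Y (n + 1) ⁻¹' {1}) ∪
        (s ∩ partialSum Y n ⁻¹' {x + 1} ∩ Y (n + 1) ⁻¹' {-1}) := by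
  ext ω
  have hsucc : partialSum Y (n + 1) ω = partialSum Y n ω + Y (n + 1) ω := sum_range_succ _ _
  simp only [Set.mem_inter_iff, Set.mem_union, Set.mem_preimage, Set.mem_singleton_iff,
    Set.mem_insert_iff, hsucc]
  constructor
  · rintro ⟨⟨hs, hx⟩, h | h⟩
    · exact Or.inl ⟨⟨hs, by linarith⟩, h⟩
    · exact Or.inr ⟨⟨hs, by linarith⟩, h⟩
  · rintro (⟨⟨hs, hx⟩, h⟩ | ⟨⟨hs, hx⟩, h⟩)
    · exact ⟨⟨hs, by linarith⟩, Or.inl h⟩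
    · exact ⟨⟨hs, by linarith⟩, Or.inr h⟩

lemma exists_mem_Icc_partialSum_eq {ω : Ω} (hY : ∀ i, Y i ω = 1 ∨ Y i ω = -1) :
    ∀ n : ℕ, ∃ x ∈ Icc (-(n + 1 : ℤ)) (n + 1), partialSum Y n ω = x
  | 0 => by
    rcases hY 0 with h | h
    · exact ⟨1, by simp, by simp [partialSum, h]⟩
    · exact ⟨-1, by simp, by simp [partialSum, h]⟩
  | n + 1 => by
    obtain ⟨x, hx, hsum⟩ := exists_mem_Icc_partialSum_eq hY n
    have hsucc : partialSum Y (n + 1) ω = partialSum Y n ω + Y (n + 1) ω := sum_range_succ _ _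
    rw [mem_Icc] at hx
    rcases hY (n + 1) with h | h
    · exact ⟨x + 1, by rw [mem_Icc]; push_cast; omega, by rw [hsucc, hsum, h]; push_cast; ring⟩
    · exact ⟨x - 1, by rw [mem_Icc]; push_cast; omega, by rw [hsucc, hsum, h]; push_cast; ring⟩

variable [MeasurableSpace Ω] {μ : Measure Ω}

lemma measure_eq_sum_inter_preimage_intCast {f : Ω → ℝ} (hf : Measurable f) {I : Finset ℤ}
    (hI : ∀ᵐ ω ∂μ, ∃ x ∈ I, f ω = x) {s : Set Ω} (hs : MeasurableSet s) :
    μ s = ∑ x ∈ I, μ (s ∩ f ⁻¹' {(x : ℝ)}) := by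
  have hnull : μ (⋃ x ∈ I, f ⁻¹' {(x : ℝ)})ᶜ = 0 := by
    rw [← ae_iff.1 hI]
    congr 1
    ext ω
    simp
  rw [← measure_inter_conull hnull, Set.inter_iUnion₂]
  refine measure_biUnion_finset (fun x _ y _ hxy => ?_) fun x _ =>
    hs.inter (hf (measurableSet_singleton _))
  exact Set.disjoint_left.2 fun ω h₁ h₂ => hxy (by exact_mod_cast h₁.2.symm.trans h₂.2)

lemma measurable_partialSum_natural (hY : ∀ i, StronglyMeasurable (Y i)) {k n : ℕ} (hkn : k ≤ n) :
    Measurable[Filtration.natural Y hY n] (partialSum Y k) := by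
  refine Finset.measurable_sum _ fun i hi => ?_
  exact ((Filtration.stronglyAdapted_natural hY i).mono
    (Filtration.mono _ (by simp at hi; omega))).measurable

lemma measurableSet_survivalSet_natural (hY : ∀ i, StronglyMeasurable (Y i)) (b : ℕ → ℕ) (n : ℕ) :
    MeasurableSet[Filtration.natural Y hY n] (survivalSet b Y n) := by
  have : survivalSet b Y n = ⋂ k ∈ Set.Icc 1 n, {ω | |partialSum Y k ω| < (b k : ℝ)} := by
    ext ω; simp [survivalSet, and_imp]
  rw [this]
  exact MeasurableSet.biInter (m := Filtration.natural Y hY n) (Set.to_countable _) fun k hk =>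
    (continuous_abs.measurable.comp (measurable_partialSum_natural hY hk.2)) measurableSet_Iio

lemma measure_inter_partialSum_succ {p : ℝ} (hY : ∀ i, Measurable (Y i)) (hind : iIndepFun Y μ)
    {n : ℕ} (hYn : μ.map (Y (n + 1)) = stepDist p) {s : Set Ω}
    (hs : MeasurableSet[Filtration.natural Y (fun i => (hY i).stronglyMeasurable) n] s) (x : ℝ) :
    μ (s ∩ partialSum Y (n + 1) ⁻¹' {x}) =
      μ (s ∩ partialSum Y n ⁻¹' {x - 1}) * ENNReal.ofReal p +
        μ (s ∩ partialSum Y n ⁻¹' {x + 1}) * ENNReal.ofReal (1 - p) := by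
  set hsm := fun i => (hY i).stronglyMeasurable
  set ℱ := Filtration.natural Y hsm
  have hprod : ∀ t, MeasurableSet[ℱ n] t → ∀ c : ℝ,
      μ (t ∩ Y (n + 1) ⁻¹' {c}) = μ t * μ.map (Y (n + 1)) {c} := by
    intro t ht c
    rw [Measure.map_apply (hY _) (measurableSet_singleton c), Set.inter_comm, mul_comm]
    exact (Indep_iff _ _ _).1 (hind.indep_comap_natural_of_lt hsm n.lt_succ_self) _ _
      ⟨{c}, measurableSet_singleton c, rfl⟩ ht
  have hfiber : ∀ y, MeasurableSet[ℱ n] (s ∩ partialSum Y n ⁻¹' {y}) := fun y =>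
    hs.inter (measurable_partialSum_natural hsm le_rfl (measurableSet_singleton y))
  have hae : μ (Y (n + 1) ⁻¹' {1, -1})ᶜ = 0 :=
    ae_iff.1 (ae_eq_one_or_eq_neg_one_of_map_eq_stepDist (hY _) hYn)
  have hdisj : Disjoint (s ∩ partialSum Y n ⁻¹' {x - 1} ∩ Y (n + 1) ⁻¹' {1})
      (s ∩ partialSum Y n ⁻¹' {x + 1} ∩ Y (n + 1) ⁻¹' {-1}) :=
    Set.disjoint_left.2 fun ω h₁ h₂ => by
      have := h₁.2.symm.trans h₂.2
      norm_num at this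
  rw [← measure_inter_conull hae, inter_preimage_partialSum_succ,
    measure_union hdisj ((ℱ.le n _ (hfiber _)).inter (hY _ (measurableSet_singleton _))),
    hprod _ (hfiber _), hprod _ (hfiber _), hYn, stepDist_singleton_one,
    stepDist_singleton_neg_one]

variable {p : ℝ}

theorem measure_survivalSet_inter_partialSum_eq (hp0 : 0 ≤ p) (hp1 : p ≤ 1)
    (hY : ∀ i, Measurable (Y i)) (hind : iIndepFun Y μ) (hY0 : μ.map (Y 0) = stepDist (1 / 2))
    (hYs : ∀ i, μ.map (Y (i + 1)) = stepDist p) (b : ℕ → ℕ) :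
    ∀ (n : ℕ) (x : ℤ),
      μ (survivalSet b Y n ∩ partialSum Y n ⁻¹' {(x : ℝ)}) = ENNReal.ofReal (survivalMass p b n x)
  | 0, x => by
    have hS : survivalSet b Y 0 = Set.univ := by ext; simp [survivalSet]; omega
    have hU : partialSum Y 0 = Y 0 := by ext; simp [partialSum]
    rw [hS, Set.univ_inter, hU, ← Measure.map_apply (hY 0) (measurableSet_singleton _), hY0]
    simp only [survivalMass]
    split_ifs with hx
    · rcases hx with rfl | rfl
      · simpa using stepDist_singleton_one (1 / 2)
      · norm_num [stepDist_singleton_neg_one]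
    · rw [stepDist_singleton_eq_zero _ (by exact_mod_cast fun h => hx (Or.inl h))
        (by exact_mod_cast fun h => hx (Or.inr h)), ENNReal.ofReal_zero]
  | n + 1, x => by
    have ih := measure_survivalSet_inter_partialSum_eq hp0 hp1 hY hind hY0 hYs b n
    have hv := survivalMass_nonneg b hp0 hp1 n
    by_cases hx : |x| < (b (n + 1) : ℤ)
    · rw [survivalSet_succ_inter_preimage, if_pos (by exact_mod_cast hx),
        measure_inter_partialSum_succ hY hind (hYs n) (measurableSet_survivalSet_natural _ b n),
        show (x : ℝ) - 1 = ((x - 1 : ℤ) : ℝ) by push_cast; ring,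
        show (x : ℝ) + 1 = ((x + 1 : ℤ) : ℝ) by push_cast; ring, ih, ih,
        ← ENNReal.ofReal_mul (hv _), ← ENNReal.ofReal_mul (hv _),
        ← ENNReal.ofReal_add (mul_nonneg (hv _) hp0) (mul_nonneg (hv _) (by linarith))]
      simp only [survivalMass, killedStep, if_pos hx]
      congr 1
      ring
    · rw [survivalSet_succ_inter_preimage, if_neg (by exact_mod_cast hx)]
      simp [survivalMass, killedStep, hx]

theorem measure_survivalSet_eq_ofReal_sum (hp0 : 0 ≤ p) (hp1 : p ≤ 1)
    (hY : ∀ i, Measurable (Y i)) (hind : iIndepFun Y μ) (hY0 : μ.map (Y 0) = stepDist (1 / 2))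
    (hYs : ∀ i, μ.map (Y (i + 1)) = stepDist p) (b : ℕ → ℕ) (m : ℕ) :
    μ (survivalSet b Y m) =
      ENNReal.ofReal (∑ x ∈ Icc (-(m + 1 : ℤ)) (m + 1), survivalMass p b m x) := by
  have hsteps : ∀ᵐ ω ∂μ, ∀ i, Y i ω = 1 ∨ Y i ω = -1 := ae_all_iff.2 fun
    | 0 => ae_eq_one_or_eq_neg_one_of_map_eq_stepDist (hY 0) hY0
    | i + 1 => ae_eq_one_or_eq_neg_one_of_map_eq_stepDist (hY _) (hYs i)
  rw [ENNReal.ofReal_sum_of_nonneg fun x _ => survivalMass_nonneg b hp0 hp1 m x,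
    measure_eq_sum_inter_preimage_intCast (Finset.measurable_sum _ fun i _ => hY i)
      (hsteps.mono fun ω hω => exists_mem_Icc_partialSum_eq hω m)
      ((Filtration.natural Y fun i => (hY i).stronglyMeasurable).le m _
        (measurableSet_survivalSet_natural _ b m))]
  exact sum_congr rfl fun x _ =>
    measure_survivalSet_inter_partialSum_eq hp0 hp1 hY hind hY0 hYs b m x

end Walk

theorem initial_state_walk_stopping_time_maximized_at_half_general
    {Ω' Ω : Type*} [MeasurableSpace Ω'] [MeasurableSpace Ω]
    (μ' : Measure Ω') (μ : Measure Ω)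
    (p : ℝ) (hp : p ∈ Set.Icc (0 : ℝ) 1)
    (Y' : ℕ → Ω' → ℝ) (Y : ℕ → Ω → ℝ)
    (hY'meas : ∀ i, Measurable (Y' i)) (hYmeas : ∀ i, Measurable (Y i))
    (hY'indep : iIndepFun Y' μ')
    (hYindep : iIndepFun Y μ)
    (hY'0dist : Measure.map (Y' 0) μ' = stepDist (1/2))
    (hY0dist : Measure.map (Y 0) μ = stepDist (1/2))
    (hY'dist : ∀ i, Measure.map (Y' (i + 1)) μ' = stepDist (1/2))
    (hYdist : ∀ i, Measure.map (Y (i + 1)) μ = stepDist p)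
    (b : ℕ → ℕ) (m : ℕ) :
    μ {ω | ∀ n, 1 ≤ n → n ≤ m → |∑ i ∈ Finset.range (n + 1), Y i ω| < (b n : ℝ)}
      ≤ μ' {ω | ∀ n, 1 ≤ n → n ≤ m → |∑ i ∈ Finset.range (n + 1), Y' i ω| < (b n : ℝ)} := by
  change μ (survivalSet b Y m) ≤ μ' (survivalSet b Y' m)
  rw [measure_survivalSet_eq_ofReal_sum hp.1 hp.2 hYmeas hYindep hY0dist hYdist,
    measure_survivalSet_eq_ofReal_sum (by norm_num) (by norm_num) hY'meas hY'indep hY'0dist hY'dist]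
  exact ENNReal.ofReal_le_ofReal (sum_Icc_survivalMass_le_half b hp.1 hp.2 m _)

/-- **Corollary 2.** Consider the walk `U^p_n = X_0 + S^p_n` with random initial state
`X_0 = ±1` with equal probabilities, independent of the increments (modelled by `Y 0 = X_0`
with `Y 0 ~ stepDist (1/2)`, increments `Y (i+1) ~ stepDist p`, all independent, and
`U^p_n = ∑_{i ≤ n} Y i`).  For non-negative integer boundaries `b_n`, the stopping time
`T̂^p = inf{n ≥ 1 : |U^p_n| ≥ b_n}` is stochastically maximized over `p ∈ [0,1]` by
`p = 1/2`: for every `p ∈ [0,1]` and every `m ≥ 1`, `P(T̂^p > m) ≤ P(T̂^{1/2} > m)`,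
where `{T̂^p > m} = {|U^p_n| < b_n for all 1 ≤ n ≤ m}`. -/
theorem initial_state_walk_stopping_time_maximized_at_half
    {Ω' Ω : Type*} [MeasurableSpace Ω'] [MeasurableSpace Ω]
    (μ' : Measure Ω') (μ : Measure Ω)
    [IsProbabilityMeasure μ'] [IsProbabilityMeasure μ]
    (p : ℝ) (hp : p ∈ Set.Icc (0 : ℝ) 1)
    (Y' : ℕ → Ω' → ℝ) (Y : ℕ → Ω → ℝ)
    (hY'meas : ∀ i, Measurable (Y' i)) (hYmeas : ∀ i, Measurable (Y i))
    (hY'indep : iIndepFun Y' μ')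
    (hYindep : iIndepFun Y μ)
    (hY'0dist : Measure.map (Y' 0) μ' = stepDist (1/2))
    (hY0dist : Measure.map (Y 0) μ = stepDist (1/2))
    (hY'dist : ∀ i, Measure.map (Y' (i + 1)) μ' = stepDist (1/2))
    (hYdist : ∀ i, Measure.map (Y (i + 1)) μ = stepDist p)
    (b : ℕ → ℕ) (m : ℕ) (hm : 1 ≤ m) :
    μ {ω | ∀ n, 1 ≤ n → n ≤ m → |∑ i ∈ Finset.range (n + 1), Y i ω| < (b n : ℝ)}
      ≤ μ' {ω | ∀ n, 1 ≤ n → n ≤ m → |∑ i ∈ Finset.range (n + 1), Y' i ω| < (b n : ℝ)} :=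
  initial_state_walk_stopping_time_maximized_at_half_general μ' μ p hp Y' Y hY'meas hYmeas hY'indep
    hYindep hY'0dist hY0dist hY'dist hYdist b m
end KilledStep
end

section
/- For every integer k ≥ 1, the function p ↦ (p^{k+1} + q^{k+1})/(p^k + q^k), where q = 1 - p, is strictly decreasing in p on [0, 1/2] and strictly increasing in p on [1/2, 1]. -/
private lemma denom_pos (k : ℕ) {p : ℝ} (h0 : 0 ≤ p) (h1 : p ≤ 1) :
    0 < p ^ k + (1 - p) ^ k := by
  rcases eq_or_lt_of_le h0 with h | h
  · subst h
    have h1 : (0:ℝ) ≤ 0 ^ k := pow_nonneg le_rfl k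
    norm_num
    linarith
  · have h1 : 0 < p ^ k := pow_pos h k
    have h2 : 0 ≤ (1 - p) ^ k := pow_nonneg (by linarith) k
    linarith

private lemma mono_half (k : ℕ) (hk : 1 ≤ k) :
    StrictMonoOn (fun p : ℝ => (p ^ (k + 1) + (1 - p) ^ (k + 1)) / (p ^ k + (1 - p) ^ k))
      (Set.Icc (1/2 : ℝ) 1) := by
  rintro a ⟨ha1, ha2⟩ b ⟨hb1, hb2⟩ hab
  have hda := denom_pos k (by linarith : (0:ℝ) ≤ a) ha2
  have hdb := denom_pos k (by linarith : (0:ℝ) ≤ b) hb2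
  simp only
  rw [div_lt_div_iff₀ hda hdb]
  have ht : 0 < b - a := by linarith
  have hs : 0 < a + b - 1 := by linarith
  have h1 : ((1 - a) * (1 - b)) ^ k ≤ (a * b) ^ k := by
    apply pow_le_pow_left₀ (by nlinarith) (by nlinarith)
  have h2 : (a * (1 - b)) ^ k < (b * (1 - a)) ^ k := by
    apply pow_lt_pow_left₀ (by nlinarith) (by nlinarith)
    omega
  have e1 : (a * b) ^ k = a ^ k * b ^ k := mul_pow a b k
  have e2 : ((1 - a) * (1 - b)) ^ k = (1 - a) ^ k * (1 - b) ^ k := mul_pow _ _ k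
  have e3 : (a * (1 - b)) ^ k = a ^ k * (1 - b) ^ k := mul_pow _ _ k
  have e4 : (b * (1 - a)) ^ k = b ^ k * (1 - a) ^ k := mul_pow _ _ k
  rw [e1, e2] at h1
  rw [e3, e4] at h2
  have key1 : 0 ≤ (b - a) * (a ^ k * b ^ k - (1 - a) ^ k * (1 - b) ^ k) :=
    mul_nonneg ht.le (by linarith)
  have key2 : 0 < (a + b - 1) * (b ^ k * (1 - a) ^ k - a ^ k * (1 - b) ^ k) :=
    mul_pos hs (by linarith)
  have pa : a ^ (k + 1) = a * a ^ k := by ring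
  have pb : b ^ (k + 1) = b * b ^ k := by ring
  have pc : (1 - a) ^ (k + 1) = (1 - a) * (1 - a) ^ k := by ring
  have pd : (1 - b) ^ (k + 1) = (1 - b) * (1 - b) ^ k := by ring
  rw [pa, pb, pc, pd]
  nlinarith [key1, key2]

/-- **Lemma 1(i).** For every integer `k ≥ 1`, the function
`p ↦ (p^(k+1) + q^(k+1)) / (p^k + q^k)`, where `q = 1 - p`, is strictly decreasing on
`[0, 1/2]` and strictly increasing on `[1/2, 1]`. -/
theorem power_ratio_strict_monotone (k : ℕ) (hk : 1 ≤ k) :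
    StrictAntiOn (fun p : ℝ => (p ^ (k + 1) + (1 - p) ^ (k + 1)) / (p ^ k + (1 - p) ^ k))
      (Set.Icc (0 : ℝ) (1/2)) ∧
    StrictMonoOn (fun p : ℝ => (p ^ (k + 1) + (1 - p) ^ (k + 1)) / (p ^ k + (1 - p) ^ k))
      (Set.Icc (1/2 : ℝ) 1) := by
  have hmono := mono_half k hk
  refine ⟨?_, hmono⟩
  rintro a ⟨ha1, ha2⟩ b ⟨hb1, hb2⟩ hab
  have sym : ∀ p : ℝ,
      ((1 - p) ^ (k + 1) + (1 - (1 - p)) ^ (k + 1)) / ((1 - p) ^ k + (1 - (1 - p)) ^ k)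
        = (p ^ (k + 1) + (1 - p) ^ (k + 1)) / (p ^ k + (1 - p) ^ k) := by
    intro p
    have h : 1 - (1 - p) = p := by ring
    rw [h, add_comm ((1-p)^(k+1)), add_comm ((1-p)^k)]
  have h1 : (1 - b) ∈ Set.Icc (1/2 : ℝ) 1 := ⟨by linarith, by linarith⟩
  have h2 : (1 - a) ∈ Set.Icc (1/2 : ℝ) 1 := ⟨by linarith, by linarith⟩
  have := hmono h1 h2 (by linarith)
  simp only at this ⊢
  rw [sym b, sym a] at this
  exact this
end

section
/- Let ℓ, ℓ', m, m' ≥ 0 be non-negative integers with ℓ ≤ ℓ' and m ≤ m', and let 0 < p < 1/2 with q = 1 - p. If the derivative with respect to p of (pq)^{ℓ'} (p^m + q^m) is negative at p, then the derivative with respect to p of (pq)^{ℓ} (p^{m'} + q^{m'}) is negative at p. -/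
/-!
Writing `s = pq` (so `s' = 1 - 2p`), `A_m = p^m + q^m` and `B_k = q^k - p^k`, one has
`s · d/dp (s^ℓ A_m) = s^ℓ (ℓ (1 - 2p) A_m - m s B_{m-1})`, so for `0 < p < 1` the derivative is
negative iff `ℓ (1 - 2p) A_m < m s B_{m-1}`. For `p ≤ 1/2` the left side grows with `ℓ`, while
passing from `m` to `m + 1` multiplies the left side by at most `q` and the right side by at
least `q`, because `p ≤ q`.
-/

section PowerBounds

variable {a b : ℝ} (ha : 0 ≤ a) (hab : a ≤ b)
include ha hab

lemma pow_succ_add_pow_succ_le_mul (k : ℕ) : a ^ (k + 1) + b ^ (k + 1) ≤ b * (a ^ k + b ^ k) := by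
  have : a * a ^ k ≤ b * a ^ k := mul_le_mul_of_nonneg_right hab (pow_nonneg ha k)
  rw [pow_succ', pow_succ']
  linarith

lemma mul_pow_sub_pow_le (k : ℕ) : b * (b ^ k - a ^ k) ≤ b ^ (k + 1) - a ^ (k + 1) := by
  have : a * a ^ k ≤ b * a ^ k := mul_le_mul_of_nonneg_right hab (pow_nonneg ha k)
  rw [pow_succ', pow_succ']
  linarith

end PowerBounds

lemma hasDerivAt_mul_one_sub_pow_mul_pow_add_one_sub_pow (ℓ m : ℕ) (x : ℝ) :
    HasDerivAt (fun x : ℝ => (x * (1 - x)) ^ ℓ * (x ^ m + (1 - x) ^ m))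
      (ℓ * (x * (1 - x)) ^ (ℓ - 1) * (1 - 2 * x) * (x ^ m + (1 - x) ^ m)
        + (x * (1 - x)) ^ ℓ * (m * x ^ (m - 1) - m * (1 - x) ^ (m - 1))) x := by
  have hs : HasDerivAt (fun x : ℝ => x * (1 - x)) (1 - 2 * x) x :=
    ((hasDerivAt_id' x).mul ((hasDerivAt_id' x).const_sub 1)).congr_deriv (by ring)
  have hA : HasDerivAt (fun x : ℝ => x ^ m + (1 - x) ^ m)
      (m * x ^ (m - 1) - m * (1 - x) ^ (m - 1)) x :=
    ((hasDerivAt_pow m x).add (((hasDerivAt_id' x).const_sub 1).pow m)).congr_deriv (by ring)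
  exact (hs.pow ℓ).mul hA

lemma mul_one_sub_mul_deriv_eq (ℓ m : ℕ) (x : ℝ) :
    x * (1 - x) * deriv (fun x : ℝ => (x * (1 - x)) ^ ℓ * (x ^ m + (1 - x) ^ m)) x
      = (x * (1 - x)) ^ ℓ * (ℓ * (1 - 2 * x) * (x ^ m + (1 - x) ^ m)
          - m * (x * (1 - x)) * ((1 - x) ^ (m - 1) - x ^ (m - 1))) := by
  rw [(hasDerivAt_mul_one_sub_pow_mul_pow_add_one_sub_pow ℓ m x).deriv]
  rcases ℓ with _ | ℓ
  · simp only [Nat.cast_zero, pow_zero]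
    ring
  · simp only [Nat.add_sub_cancel, Nat.cast_succ, pow_succ]
    ring

-- The truncated `m - 1` at `m = 0` is harmless: that term carries the factor `m`.
def DerivNegCondition (ℓ m : ℕ) (p : ℝ) : Prop :=
  ℓ * (1 - 2 * p) * (p ^ m + (1 - p) ^ m) < m * (p * (1 - p)) * ((1 - p) ^ (m - 1) - p ^ (m - 1))

lemma deriv_mul_one_sub_pow_mul_neg_iff (ℓ m : ℕ) {x : ℝ} (hx0 : 0 < x) (hx1 : x < 1) :
    deriv (fun x : ℝ => (x * (1 - x)) ^ ℓ * (x ^ m + (1 - x) ^ m)) x < 0 ↔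
      DerivNegCondition ℓ m x := by
  have hs : 0 < x * (1 - x) := mul_pos hx0 (by linarith)
  rw [← smul_neg_iff_of_pos_left hs, smul_eq_mul, mul_one_sub_mul_deriv_eq, ← smul_eq_mul,
    smul_neg_iff_of_pos_left (pow_pos hs ℓ), sub_neg]
  rfl

section DerivNegCondition

variable {p : ℝ} (hp0 : 0 ≤ p) (hp : p ≤ 1 / 2)
include hp0 hp

lemma DerivNegCondition.of_le_left {ℓ ℓ' m : ℕ} (hℓ : ℓ ≤ ℓ') (h : DerivNegCondition ℓ' m p) :
    DerivNegCondition ℓ m p := by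
  have hA : 0 ≤ (1 - 2 * p) * (p ^ m + (1 - p) ^ m) :=
    mul_nonneg (by linarith) (add_nonneg (pow_nonneg hp0 m) (pow_nonneg (by linarith) m))
  have hℓ' : (ℓ : ℝ) ≤ ℓ' := Nat.cast_le.mpr hℓ
  unfold DerivNegCondition at h ⊢
  rw [mul_assoc] at h ⊢
  exact (mul_le_mul_of_nonneg_right hℓ' hA).trans_lt h

lemma DerivNegCondition.succ_right {ℓ m : ℕ} (h : DerivNegCondition ℓ m p) :
    DerivNegCondition ℓ (m + 1) p := by
  have hpq : p ≤ 1 - p := by linarith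
  have hq : 0 < 1 - p := by linarith
  have hs : 0 ≤ p * (1 - p) := mul_nonneg hp0 hq.le
  have hD : 0 ≤ ℓ * (1 - 2 * p) := mul_nonneg (Nat.cast_nonneg ℓ) (by linarith)
  have hB : 0 ≤ (1 - p) ^ m - p ^ m := sub_nonneg.mpr (pow_le_pow_left₀ hp0 hpq m)
  have hB_succ : (1 - p) * (m * ((1 - p) ^ (m - 1) - p ^ (m - 1)))
      ≤ m * ((1 - p) ^ m - p ^ m) := by
    rcases m with _ | k
    · simp
    · rw [mul_left_comm]
      exact mul_le_mul_of_nonneg_left (mul_pow_sub_pow_le hp0 hpq k) (Nat.cast_nonneg _)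
  unfold DerivNegCondition at h ⊢
  rw [Nat.add_sub_cancel]
  push_cast
  calc ℓ * (1 - 2 * p) * (p ^ (m + 1) + (1 - p) ^ (m + 1))
      ≤ (1 - p) * (ℓ * (1 - 2 * p) * (p ^ m + (1 - p) ^ m)) := by
        rw [mul_left_comm]
        exact mul_le_mul_of_nonneg_left (pow_succ_add_pow_succ_le_mul hp0 hpq m) hD
    _ < (1 - p) * (m * (p * (1 - p)) * ((1 - p) ^ (m - 1) - p ^ (m - 1))) :=
        mul_lt_mul_of_pos_left h hq
    _ = p * (1 - p) * ((1 - p) * (m * ((1 - p) ^ (m - 1) - p ^ (m - 1)))) := by ring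
    _ ≤ p * (1 - p) * (m * ((1 - p) ^ m - p ^ m)) := mul_le_mul_of_nonneg_left hB_succ hs
    _ ≤ (m + 1) * (p * (1 - p)) * ((1 - p) ^ m - p ^ m) := by linarith [mul_nonneg hs hB]

lemma DerivNegCondition.of_le_right {ℓ m m' : ℕ} (hm : m ≤ m') (h : DerivNegCondition ℓ m p) :
    DerivNegCondition ℓ m' p := by
  induction m', hm using Nat.le_induction with
  | base => exact h
  | succ n _ ih => exact ih.succ_right hp0 hp

end DerivNegCondition

/-- **Lemma 3(i).** Let `ℓ ≤ ℓ'` and `m ≤ m'` be non-negative integers and `0 < p < 1/2`,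
with `q = 1 - p`.  If the derivative at `p` of `p ↦ (pq)^ℓ' (p^m + q^m)` is negative, then
the derivative at `p` of `p ↦ (pq)^ℓ (p^m' + q^m')` is negative. -/
theorem deriv_neg_transfer (ℓ ℓ' m m' : ℕ) (hℓ : ℓ ≤ ℓ') (hm : m ≤ m')
    (p : ℝ) (hp0 : 0 < p) (hp : p < 1/2)
    (h : deriv (fun x : ℝ => (x * (1 - x)) ^ ℓ' * (x ^ m + (1 - x) ^ m)) p < 0) :
    deriv (fun x : ℝ => (x * (1 - x)) ^ ℓ * (x ^ m' + (1 - x) ^ m')) p < 0 := by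
  have hp1 : p < 1 := by linarith
  rw [deriv_mul_one_sub_pow_mul_neg_iff ℓ' m hp0 hp1] at h
  rw [deriv_mul_one_sub_pow_mul_neg_iff ℓ m' hp0 hp1]
  exact (h.of_le_left hp0.le hp.le hℓ).of_le_right hp0.le hp.le hm
end

section
/- Let ℓ, ℓ', m, m' ≥ 0 be non-negative integers with ℓ ≤ ℓ' and m ≤ m', and let 0 < p < p' ≤ 1/2, with q = 1 - p and q' = 1 - p'. Then ((p'q')^{ℓ} ((p')^{m'} + (q')^{m'})) / ((pq)^{ℓ} (p^{m'} + q^{m'})) ≤ ((p'q')^{ℓ'} ((p')^{m} + (q')^{m})) / ((pq)^{ℓ'} (p^{m} + q^{m})). -/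
private lemma step_ineq (p p' : ℝ) (hp0 : 0 < p) (hpp' : p < p') (hp'half : p' ≤ 1/2)
    (k : ℕ) :
    (p' ^ (k+1) + (1 - p') ^ (k+1)) * (p ^ k + (1 - p) ^ k)
      ≤ (p' ^ k + (1 - p') ^ k) * (p ^ (k+1) + (1 - p) ^ (k+1)) := by
  have hp'0 : 0 < p' := hp0.trans hpp'
  have hq'0 : (0:ℝ) < 1 - p' := by linarith
  have hq0 : (0:ℝ) < 1 - p := by linarith
  have h1 : p' * p ≤ (1 - p') * (1 - p) := by nlinarith
  have h2 : (1 - p') * p ≤ p' * (1 - p) := by nlinarith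
  have h1k : p' ^ k * p ^ k ≤ (1 - p') ^ k * (1 - p) ^ k := by
    rw [← mul_pow, ← mul_pow]
    exact pow_le_pow_left₀ (by positivity) h1 k
  have h2k : (1 - p') ^ k * p ^ k ≤ p' ^ k * (1 - p) ^ k := by
    rw [← mul_pow, ← mul_pow]
    exact pow_le_pow_left₀ (by positivity) h2 k
  have hsum : (0:ℝ) < 1 - p - p' := by linarith
  rw [pow_succ, pow_succ, pow_succ, pow_succ]
  nlinarith [mul_nonneg (sub_nonneg.2 h1k) (le_of_lt (sub_pos.2 hpp')),
    mul_nonneg (sub_nonneg.2 h2k) hsum.le]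

private lemma cross_ineq (p p' : ℝ) (hp0 : 0 < p) (hpp' : p < p') (hp'half : p' ≤ 1/2)
    {m m' : ℕ} (hm : m ≤ m') :
    (p' ^ m' + (1 - p') ^ m') * (p ^ m + (1 - p) ^ m)
      ≤ (p' ^ m + (1 - p') ^ m) * (p ^ m' + (1 - p) ^ m') := by
  induction m' with
  | zero => simp_all
  | succ k ih =>
    rcases Nat.lt_or_ge m (k+1) with h | h
    · have ihk := ih (Nat.lt_succ_iff.mp h)
      have hp'0 : 0 < p' := hp0.trans hpp'
      have hq'0 : (0:ℝ) < 1 - p' := by linarith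
      have hq0 : (0:ℝ) < 1 - p := by linarith
      have hPk : (0:ℝ) < p ^ k + (1 - p) ^ k := by positivity
      have hPk1 : (0:ℝ) < p ^ (k+1) + (1 - p) ^ (k+1) := by positivity
      have hPm : (0:ℝ) < p ^ m + (1 - p) ^ m := by positivity
      have step := step_ineq p p' hp0 hpp' hp'half k
      -- (p'^{k+1}+q'^{k+1})/(p^{k+1}+q^{k+1}) ≤ (p'^k+q'^k)/(p^k+q^k) ≤ (p'^m+q'^m)/(p^m+q^m)
      have d1 : (p' ^ (k+1) + (1 - p') ^ (k+1)) / (p ^ (k+1) + (1 - p) ^ (k+1))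
          ≤ (p' ^ k + (1 - p') ^ k) / (p ^ k + (1 - p) ^ k) :=
        (div_le_div_iff₀ hPk1 hPk).2 (by linarith [step])
      have d2 : (p' ^ k + (1 - p') ^ k) / (p ^ k + (1 - p) ^ k)
          ≤ (p' ^ m + (1 - p') ^ m) / (p ^ m + (1 - p) ^ m) :=
        (div_le_div_iff₀ hPk hPm).2 (by linarith [ihk])
      have := d1.trans d2
      rw [div_le_div_iff₀ hPk1 hPm] at this
      linarith
    · have : m = k + 1 := le_antisymm hm h
      subst this
      ring_nf
      exact le_refl _

/-- **Lemma 3(ii).** Let `ℓ ≤ ℓ'` and `m ≤ m'` be non-negative integers and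
`0 < p < p' ≤ 1/2`, with `q = 1 - p` and `q' = 1 - p'`.  Then
`(p'q')^ℓ ((p')^m' + (q')^m') / ((pq)^ℓ (p^m' + q^m'))
  ≤ (p'q')^ℓ' ((p')^m + (q')^m) / ((pq)^ℓ' (p^m + q^m))`. -/
theorem power_ratio_cross_inequality (ℓ ℓ' m m' : ℕ) (hℓ : ℓ ≤ ℓ') (hm : m ≤ m')
    (p p' : ℝ) (hp0 : 0 < p) (hpp' : p < p') (hp'half : p' ≤ 1/2) :
    ((p' * (1 - p')) ^ ℓ * (p' ^ m' + (1 - p') ^ m'))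
        / ((p * (1 - p)) ^ ℓ * (p ^ m' + (1 - p) ^ m'))
      ≤ ((p' * (1 - p')) ^ ℓ' * (p' ^ m + (1 - p') ^ m))
        / ((p * (1 - p)) ^ ℓ' * (p ^ m + (1 - p) ^ m)) := by
  have hp'0 : 0 < p' := hp0.trans hpp'
  have hq'0 : (0:ℝ) < 1 - p' := by linarith
  have hq0 : (0:ℝ) < 1 - p := by linarith
  have hA : (0:ℝ) < p' * (1 - p') := by positivity
  have hB : (0:ℝ) < p * (1 - p) := by positivity
  have hBA : p * (1 - p) ≤ p' * (1 - p') := by nlinarith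
  have hR1 : (1:ℝ) ≤ (p' * (1 - p')) / (p * (1 - p)) := (one_le_div hB).2 hBA
  have hPm : (0:ℝ) < p ^ m + (1 - p) ^ m := by positivity
  have hPm' : (0:ℝ) < p ^ m' + (1 - p) ^ m' := by positivity
  have hQm : (0:ℝ) < p' ^ m + (1 - p') ^ m := by positivity
  have hQm' : (0:ℝ) < p' ^ m' + (1 - p') ^ m' := by positivity
  have key : (p' ^ m' + (1 - p') ^ m') / (p ^ m' + (1 - p) ^ m')
      ≤ (p' ^ m + (1 - p') ^ m) / (p ^ m + (1 - p) ^ m) := by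
    rw [div_le_div_iff₀ hPm' hPm]
    linarith [cross_ineq p p' hp0 hpp' hp'half hm]
  have hpow : ((p' * (1 - p')) / (p * (1 - p))) ^ ℓ
      ≤ ((p' * (1 - p')) / (p * (1 - p))) ^ ℓ' := pow_le_pow_right₀ hR1 hℓ
  calc ((p' * (1 - p')) ^ ℓ * (p' ^ m' + (1 - p') ^ m'))
        / ((p * (1 - p)) ^ ℓ * (p ^ m' + (1 - p) ^ m'))
      = ((p' * (1 - p')) / (p * (1 - p))) ^ ℓ
          * ((p' ^ m' + (1 - p') ^ m') / (p ^ m' + (1 - p) ^ m')) := by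
        rw [div_pow]; field_simp
    _ ≤ ((p' * (1 - p')) / (p * (1 - p))) ^ ℓ'
          * ((p' ^ m + (1 - p') ^ m) / (p ^ m + (1 - p) ^ m)) := by
        apply mul_le_mul hpow key (by positivity) (by positivity)
    _ = ((p' * (1 - p')) ^ ℓ' * (p' ^ m + (1 - p') ^ m))
        / ((p * (1 - p)) ^ ℓ' * (p ^ m + (1 - p) ^ m)) := by
        rw [div_pow]; field_simp
end
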